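/- arXiv:2601.13881 — 8 statements merged into one kernel-verified Lean document; each statement's English description precedes it below -/
import Mathlib

section
/- Variance bound for the combined estimator (Theorem 2): with the quasiprobability sampling setup and unbiased snapshot maps described in the context, assume there exist reals B ≥ 0 and b ≥ 0 such that for every multi-index l: Σ_{ω∈Ω_l} μ_l(ω) (Tr(O ρ̂_l(ω)))² ≤ B and |Tr(O Φ_l(ρ))| ≤ b. Then the variance of the overall estimator ⟨Ô⟩ := (1/(M·N_s)) Σ_{m=1}^{M} Σ_{s=1}^{N_s} Γ_{l_m} · Tr(O ρ̂_{l_m}(ω_{m,s})), taken over the product distribution in which l_1,…,l_M are drawn independently with probability p(l) and, given l_m, the ω_{m,s} are drawn independently from μ_{l_m}, satisfies Var[⟨Ô⟩] ≤ Γ² · ( (B − b²)/(M·N_s) + b²/M ). -/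
open Matrix
open scoped BigOperators

lemma sum_pi_prod {ι : Type*} [Fintype ι] [DecidableEq ι] (κ : ι → Type*) [∀ i, Fintype (κ i)]
    (f : ∀ i, κ i → ℝ) :
    ∑ x : ∀ i, κ i, ∏ i, f i (x i) = ∏ i, ∑ j, f i j :=
  (Fintype.prod_sum f).symm

lemma update_apply_eq {ι : Type*} [DecidableEq ι] {κ : ι → Type*}
    (g : ∀ i, κ i → ℝ) (i₀ : ι) (f : κ i₀ → ℝ) (x : ∀ i, κ i) (i : ι) :
    Function.update g i₀ f i (x i) = Function.update (fun i => g i (x i)) i₀ (f (x i₀)) i := by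
  rcases eq_or_ne i i₀ with h | h
  · subst h; simp
  · simp [Function.update_of_ne h]

lemma prod_update_one {ι : Type*} [Fintype ι] [DecidableEq ι] (i₀ : ι) (A : ℝ) :
    ∏ i, Function.update (fun _ : ι => (1:ℝ)) i₀ A i = A := by
  rw [Finset.prod_update_of_mem (Finset.mem_univ i₀)]
  simp

lemma prod_update_two {ι : Type*} [Fintype ι] [DecidableEq ι] (i₀ i₁ : ι) (h : i₀ ≠ i₁)
    (A A' : ℝ) :
    ∏ i, Function.update (Function.update (fun _ : ι => (1:ℝ)) i₀ A) i₁ A' i = A * A' := by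
  rw [Finset.prod_update_of_mem (Finset.mem_univ i₁),
      Finset.prod_update_of_mem (by simp [h.symm, h] : i₀ ∈ Finset.univ \ {i₁})]
  simp [mul_comm]

lemma marg_single {ι : Type*} [Fintype ι] [DecidableEq ι] (κ : ι → Type*) [∀ i, Fintype (κ i)]
    (W : ∀ i, κ i → ℝ) (hW : ∀ i, ∑ j, W i j = 1) (i₀ : ι) (f : κ i₀ → ℝ) :
    ∑ x : ∀ i, κ i, (∏ i, W i (x i)) * f (x i₀) = ∑ j, W i₀ j * f j := by
  set F : ∀ i, κ i → ℝ := Function.update (fun i (_ : κ i) => (1:ℝ)) i₀ f with hF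
  have key : ∀ x : ∀ i, κ i, (∏ i, W i (x i)) * f (x i₀)
      = ∏ i, (W i (x i) * F i (x i)) := by
    intro x
    rw [Finset.prod_mul_distrib]
    congr 1
    rw [Finset.prod_congr rfl (fun i _ => update_apply_eq _ i₀ f x i), prod_update_one]
  simp_rw [key]
  rw [sum_pi_prod κ (fun i j => W i j * F i j)]
  have h2 : ∀ i, (∑ j, W i j * F i j)
      = Function.update (fun _ : ι => (1:ℝ)) i₀ (∑ j, W i₀ j * f j) i := by
    intro i
    rcases eq_or_ne i i₀ with h | h
    · subst h; simp [hF]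
    · simp [hF, Function.update_of_ne h, hW i]
  rw [Finset.prod_congr rfl (fun i _ => h2 i), prod_update_one]

lemma marg_pair {ι : Type*} [Fintype ι] [DecidableEq ι] (κ : ι → Type*) [∀ i, Fintype (κ i)]
    (W : ∀ i, κ i → ℝ) (hW : ∀ i, ∑ j, W i j = 1) (i₀ i₁ : ι) (hne : i₀ ≠ i₁)
    (f : κ i₀ → ℝ) (f' : κ i₁ → ℝ) :
    ∑ x : ∀ i, κ i, (∏ i, W i (x i)) * (f (x i₀) * f' (x i₁))
      = (∑ j, W i₀ j * f j) * (∑ j, W i₁ j * f' j) := by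
  set F : ∀ i, κ i → ℝ :=
    Function.update (Function.update (fun i (_ : κ i) => (1:ℝ)) i₀ f) i₁ f' with hF
  have key : ∀ x : ∀ i, κ i, (∏ i, W i (x i)) * (f (x i₀) * f' (x i₁))
      = ∏ i, (W i (x i) * F i (x i)) := by
    intro x
    rw [Finset.prod_mul_distrib]
    congr 1
    have h1 : ∀ i, F i (x i)
        = Function.update (Function.update (fun _ : ι => (1:ℝ)) i₀ (f (x i₀))) i₁ (f' (x i₁)) i := by
      intro i
      rw [hF, update_apply_eq]
      congr 1
      funext j
      exact update_apply_eq _ i₀ f x j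
    rw [Finset.prod_congr rfl (fun i _ => h1 i), prod_update_two _ _ hne]
  simp_rw [key]
  rw [sum_pi_prod κ (fun i j => W i j * F i j)]
  have h2 : ∀ i, (∑ j, W i j * F i j)
      = Function.update (Function.update (fun _ : ι => (1:ℝ)) i₀ (∑ j, W i₀ j * f j)) i₁
          (∑ j, W i₁ j * f' j) i := by
    intro i
    rcases eq_or_ne i i₁ with h | h
    · subst h; simp [hF]
    · rcases eq_or_ne i i₀ with h' | h'
      · subst h'
        simp [hF, Function.update_of_ne h]
      · simp [hF, Function.update_of_ne h, Function.update_of_ne h', hW i]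
  rw [Finset.prod_congr rfl (fun i _ => h2 i), prod_update_two _ _ hne]

lemma count_ite {ι : Type*} [Fintype ι] [DecidableEq ι] (Av Bv : ℝ) :
    ∑ i : ι, ∑ j : ι, (if i = j then Av else Bv)
      = (Fintype.card ι : ℝ) * Av + ((Fintype.card ι : ℝ) ^ 2 - (Fintype.card ι : ℝ)) * Bv := by
  have h : ∀ i j : ι, (if i = j then Av else Bv) = Bv + (if i = j then Av - Bv else 0) := by
    intro i j; split <;> ring
  simp only [h, Finset.sum_add_distrib, Finset.sum_const, Finset.card_univ, nsmul_eq_mul,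
    Finset.sum_ite_eq, Finset.mem_univ, if_true]
  ring

lemma exp_sum_const {ι X : Type*} [Fintype ι] [DecidableEq ι] [Fintype X]
    (W : X → ℝ) (hW : ∑ x, W x = 1) (f : X → ℝ) :
    ∑ q : ι → X, (∏ i, W (q i)) * (∑ i, f (q i))
      = (Fintype.card ι : ℝ) * ∑ x, W x * f x := by
  have h : ∀ q : ι → X, (∏ i, W (q i)) * (∑ i, f (q i))
      = ∑ i, (∏ i', W (q i')) * f (q i) := fun q => Finset.mul_sum _ _ _
  rw [Finset.sum_congr rfl fun q _ => h q, Finset.sum_comm]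
  rw [Finset.sum_congr rfl fun i (_ : i ∈ Finset.univ) =>
    marg_single (fun _ : ι => X) (fun _ => W) (fun _ => hW) i f]
  rw [Finset.sum_const, Finset.card_univ, nsmul_eq_mul]

lemma exp_sum_sq_const {ι X : Type*} [Fintype ι] [DecidableEq ι] [Fintype X]
    (W : X → ℝ) (hW : ∑ x, W x = 1) (f : X → ℝ) :
    ∑ q : ι → X, (∏ i, W (q i)) * ((∑ i, f (q i)) * (∑ i, f (q i)))
      = (Fintype.card ι : ℝ) * (∑ x, W x * (f x * f x))
        + ((Fintype.card ι : ℝ) ^ 2 - (Fintype.card ι : ℝ))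
          * ((∑ x, W x * f x) * (∑ x, W x * f x)) := by
  have h : ∀ q : ι → X, (∏ i, W (q i)) * ((∑ i, f (q i)) * (∑ i, f (q i)))
      = ∑ i, ∑ j, (∏ i', W (q i')) * (f (q i) * f (q j)) := by
    intro q
    rw [Finset.sum_mul_sum, Finset.mul_sum]
    exact Finset.sum_congr rfl fun i _ => Finset.mul_sum _ _ _
  rw [Finset.sum_congr rfl fun q _ => h q, Finset.sum_comm]
  have h2 : ∀ i : ι, (∑ q : ι → X, ∑ j, (∏ i', W (q i')) * (f (q i) * f (q j)))
      = ∑ j, ∑ q : ι → X, (∏ i', W (q i')) * (f (q i) * f (q j)) := fun i => Finset.sum_comm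
  rw [Finset.sum_congr rfl fun i _ => h2 i]
  have h3 : ∀ i j : ι, (∑ q : ι → X, (∏ i', W (q i')) * (f (q i) * f (q j)))
      = if i = j then (∑ x, W x * (f x * f x)) else ((∑ x, W x * f x) * (∑ x, W x * f x)) := by
    intro i j
    rcases eq_or_ne i j with rfl | hne
    · rw [if_pos rfl]
      exact marg_single (fun _ : ι => X) (fun _ => W) (fun _ => hW) i (fun x => f x * f x)
    · rw [if_neg hne]
      exact marg_pair (fun _ : ι => X) (fun _ => W) (fun _ => hW) i j hne f f
  rw [Finset.sum_congr rfl fun i _ => Finset.sum_congr rfl fun j _ => h3 i j, count_ite]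

lemma sum_sigma_pi {α ι : Type*} [Fintype α] [DecidableEq α] [Fintype ι] [DecidableEq ι]
    (F : ι → Type*) [∀ l, Fintype (F l)]
    (Φ : (∀ _ : α, Σ l : ι, F l) → ℝ) :
    ∑ L : α → ι, ∑ w : ∀ m, F (L m), Φ (fun m => ⟨L m, w m⟩) = ∑ q, Φ q := by
  rw [← Equiv.sum_comp
      (⟨fun p m => ⟨p.1 m, p.2 m⟩, fun q => ⟨fun m => (q m).1, fun m => (q m).2⟩,
        fun p => rfl, fun q => rfl⟩ :
        (Σ L : α → ι, ∀ m, F (L m)) ≃ (∀ _ : α, Σ l : ι, F l)) Φ,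
    ← Finset.univ_sigma_univ, Finset.sum_sigma]
  rfl

/-- Sequential composition `Φ_{K} ∘ ⋯ ∘ Φ_{1}` of a finite family of linear maps on
`n × n` complex matrices (the map with index `0` is applied first). -/
noncomputable def compSeq {n K : ℕ}
    (f : Fin K → (Matrix (Fin n) (Fin n) ℂ →ₗ[ℂ] Matrix (Fin n) (Fin n) ℂ)) :
    Matrix (Fin n) (Fin n) ℂ →ₗ[ℂ] Matrix (Fin n) (Fin n) ℂ :=
  (List.ofFn f).foldl (fun acc g => g ∘ₗ acc) LinearMap.id

/-- **Variance bound for the combined quasiprobability–classical-shadow estimator**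
(Theorem 2): if `Σ_ω μ_l(ω) (Tr(O ρ̂_l(ω)))² ≤ B` and `|Tr(O Φ_l(ρ))| ≤ b` for every
multi-index `l`, then the variance of the overall estimator
`⟨Ô⟩ = (1/(M·N_s)) Σ_m Σ_s Γ_{l_m} · Tr(O ρ̂_{l_m}(ω_{m,s}))` satisfies
`Var[⟨Ô⟩] ≤ Γ² ((B − b²)/(M N_s) + b²/M)`. -/
theorem combined_estimator_variance_bound
    (n K D : ℕ) (hn : 1 ≤ n) (hD : 1 ≤ D)
    (a : Fin K → Fin D → ℝ)
    (Φ : Fin K → Fin D → (Matrix (Fin n) (Fin n) ℂ →ₗ[ℂ] Matrix (Fin n) (Fin n) ℂ))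
    (hγ : ∀ k, 0 < ∑ d, |a k d|)
    (ρ : Matrix (Fin n) (Fin n) ℂ)
    (O : Matrix (Fin n) (Fin n) ℂ) (hO : O.IsHermitian)
    (Ω : (Fin K → Fin D) → Type) [∀ l, Fintype (Ω l)]
    (μ : ∀ l, Ω l → ℝ)
    (hμ0 : ∀ l ω, 0 ≤ μ l ω) (hμ1 : ∀ l, ∑ ω, μ l ω = 1)
    (ρhat : ∀ l, Ω l → Matrix (Fin n) (Fin n) ℂ)
    (hherm : ∀ l ω, (ρhat l ω).IsHermitian)
    (hsnap : ∀ l, ∑ ω, μ l ω • ρhat l ω = compSeq (fun k => Φ k (l k)) ρ)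
    (B b : ℝ) (hB : 0 ≤ B) (hb : 0 ≤ b)
    (hB' : ∀ l : Fin K → Fin D,
      ∑ ω, μ l ω * (((O * ρhat l ω).trace).re) ^ 2 ≤ B)
    (hb' : ∀ l : Fin K → Fin D,
      ‖(O * compSeq (fun k => Φ k (l k)) ρ).trace‖ ≤ b)
    (M Ns : ℕ) (hM : 1 ≤ M) (hNs : 1 ≤ Ns) :
    (∑ L : Fin M → (Fin K → Fin D),
        ∑ w : (m : Fin M) → Fin Ns → Ω (L m),
          ((∏ m, ∏ k, |a k (L m k)| / (∑ d, |a k d|)) *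
              (∏ m, ∏ s, μ (L m) (w m s))) *
            ((1 / ((M : ℝ) * (Ns : ℝ))) *
              ∑ m, ∑ s,
                ((∏ k, (∑ d, |a k d|)) * ∏ k, Real.sign (a k (L m k))) *
                  ((O * ρhat (L m) (w m s)).trace).re) ^ 2)
      - (∑ L : Fin M → (Fin K → Fin D),
          ∑ w : (m : Fin M) → Fin Ns → Ω (L m),
            ((∏ m, ∏ k, |a k (L m k)| / (∑ d, |a k d|)) *
                (∏ m, ∏ s, μ (L m) (w m s))) *
              ((1 / ((M : ℝ) * (Ns : ℝ))) *
                ∑ m, ∑ s,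
                  ((∏ k, (∑ d, |a k d|)) * ∏ k, Real.sign (a k (L m k))) *
                    ((O * ρhat (L m) (w m s)).trace).re)) ^ 2
      ≤ (∏ k, (∑ d, |a k d|)) ^ 2 *
          ((B - b ^ 2) / ((M : ℝ) * (Ns : ℝ)) + b ^ 2 / (M : ℝ)) := by
  classical
  have hMpos : (0:ℝ) < M := by exact_mod_cast hM
  have hNspos : (0:ℝ) < Ns := by exact_mod_cast hNs
  set c : ℝ := 1 / ((M : ℝ) * (Ns : ℝ)) with hcdef
  set Γ : ℝ := ∏ k, (∑ d, |a k d|) with hΓdef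
  set g : (l : Fin K → Fin D) → Ω l → ℝ :=
    fun l ω => (Γ * ∏ k, Real.sign (a k (l k))) * ((O * ρhat l ω).trace).re with hgdef
  set p : (Fin K → Fin D) → ℝ := fun l => ∏ k, |a k (l k)| / (∑ d, |a k d|) with hpdef
  set A : (Σ l : Fin K → Fin D, (Fin Ns → Ω l)) → ℝ :=
    fun z => p z.1 * ∏ s, μ z.1 (z.2 s) with hAdef
  set fY : (Σ l : Fin K → Fin D, (Fin Ns → Ω l)) → ℝ :=
    fun z => ∑ s, g z.1 (z.2 s) with hfYdef
  -- Rewrite the two big nested sums as expectations over `q : Fin M → Σ l, (Fin Ns → Ω l)`.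
  have hE : ∀ h : ℝ → ℝ,
      (∑ L : Fin M → (Fin K → Fin D),
        ∑ w : (m : Fin M) → Fin Ns → Ω (L m),
          ((∏ m, ∏ k, |a k (L m k)| / (∑ d, |a k d|)) *
              (∏ m, ∏ s, μ (L m) (w m s))) *
            h (c * ∑ m, ∑ s,
                (Γ * ∏ k, Real.sign (a k (L m k))) *
                  ((O * ρhat (L m) (w m s)).trace).re))
      = ∑ q : Fin M → (Σ l : Fin K → Fin D, (Fin Ns → Ω l)),
          (∏ m, A (q m)) * h (c * ∑ m, fY (q m)) := by
    intro h
    rw [← sum_sigma_pi (fun l => Fin Ns → Ω l)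
        (fun q => (∏ m, A (q m)) * h (c * ∑ m, fY (q m)))]
    refine Finset.sum_congr rfl fun L _ => Finset.sum_congr rfl fun w _ => ?_
    simp only [hAdef, hfYdef, hpdef, hgdef]
    rw [← Finset.prod_mul_distrib]
  have h2 := hE (fun t => t ^ 2)
  have h1 := hE (fun t => t)
  rw [h2, h1]
  -- normalization of the single-index distribution
  have hp0 : ∀ l, 0 ≤ p l := by
    intro l; rw [hpdef]
    exact Finset.prod_nonneg fun k _ => div_nonneg (abs_nonneg _) (hγ k).le
  have hp1 : ∑ l, p l = 1 := by
    rw [hpdef]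
    rw [sum_pi_prod (fun _ : Fin K => Fin D) (fun k d => |a k d| / (∑ d', |a k d'|))]
    refine Finset.prod_eq_one fun k _ => ?_
    rw [← Finset.sum_div, div_self (hγ k).ne']
  have hA1 : ∑ z : (Σ l : Fin K → Fin D, (Fin Ns → Ω l)), A z = 1 := by
    rw [← Finset.univ_sigma_univ, Finset.sum_sigma]
    have hl : ∀ l, (∑ v : Fin Ns → Ω l, A ⟨l, v⟩) = p l := by
      intro l
      simp only [hAdef]
      rw [← Finset.mul_sum,
        sum_pi_prod (fun _ : Fin Ns => Ω l) (fun _ ω => μ l ω)]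
      simp [hμ1 l]
    rw [Finset.sum_congr rfl fun l _ => hl l, hp1]
  -- level-2 reduction (over the M rounds)
  set E1 : ℝ := ∑ z, A z * fY z with hE1def
  set E2 : ℝ := ∑ z, A z * (fY z * fY z) with hE2def
  have lv2lin : (∑ q : Fin M → (Σ l : Fin K → Fin D, (Fin Ns → Ω l)),
      (∏ m, A (q m)) * (c * ∑ m, fY (q m))) = c * ((M : ℝ) * E1) := by
    have hq : ∀ q : Fin M → (Σ l : Fin K → Fin D, (Fin Ns → Ω l)),
        (∏ m, A (q m)) * (c * ∑ m, fY (q m))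
          = c * ((∏ m, A (q m)) * (∑ m, fY (q m))) := fun q => by ring
    rw [Finset.sum_congr rfl fun q _ => hq q, ← Finset.mul_sum,
      exp_sum_const A hA1 fY, Fintype.card_fin, hE1def]
  have lv2sq : (∑ q : Fin M → (Σ l : Fin K → Fin D, (Fin Ns → Ω l)),
      (∏ m, A (q m)) * (c * ∑ m, fY (q m)) ^ 2)
        = c ^ 2 * ((M : ℝ) * E2 + ((M : ℝ) ^ 2 - (M : ℝ)) * (E1 * E1)) := by
    have hq : ∀ q : Fin M → (Σ l : Fin K → Fin D, (Fin Ns → Ω l)),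
        (∏ m, A (q m)) * (c * ∑ m, fY (q m)) ^ 2
          = c ^ 2 * ((∏ m, A (q m)) * ((∑ m, fY (q m)) * (∑ m, fY (q m)))) := fun q => by ring
    rw [Finset.sum_congr rfl fun q _ => hq q, ← Finset.mul_sum,
      exp_sum_sq_const A hA1 fY, Fintype.card_fin, hE1def, hE2def]
  rw [lv2lin, lv2sq]
  -- level-1 reduction (over the Ns shots, for a fixed multi-index)
  set c1 : (Fin K → Fin D) → ℝ := fun l => ∑ ω, μ l ω * g l ω with hc1def
  set c2 : (Fin K → Fin D) → ℝ := fun l => ∑ ω, μ l ω * (g l ω * g l ω) with hc2def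
  have hsig : ∀ f : (Σ l : Fin K → Fin D, (Fin Ns → Ω l)) → ℝ,
      (∑ z, f z) = ∑ l, ∑ v : Fin Ns → Ω l, f ⟨l, v⟩ := by
    intro f; rw [← Finset.univ_sigma_univ, Finset.sum_sigma]
  have hE1v : E1 = (Ns : ℝ) * ∑ l, p l * c1 l := by
    rw [hE1def, hsig]
    have hl : ∀ l, (∑ v : Fin Ns → Ω l, A ⟨l, v⟩ * fY ⟨l, v⟩)
        = (Ns : ℝ) * (p l * c1 l) := by
      intro l
      simp only [hAdef, hfYdef]
      have hv : ∀ v : Fin Ns → Ω l,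
          (p l * ∏ s, μ l (v s)) * (∑ s, g l (v s))
            = p l * ((∏ s, μ l (v s)) * (∑ s, g l (v s))) := fun v => by ring
      rw [Finset.sum_congr rfl fun v _ => hv v, ← Finset.mul_sum,
        exp_sum_const (μ l) (hμ1 l) (g l), Fintype.card_fin, hc1def]
      ring
    rw [Finset.sum_congr rfl fun l _ => hl l, ← Finset.mul_sum]
  have hE2v : E2 = ∑ l, p l *
      ((Ns : ℝ) * c2 l + ((Ns : ℝ) ^ 2 - (Ns : ℝ)) * (c1 l * c1 l)) := by
    rw [hE2def, hsig]
    refine Finset.sum_congr rfl fun l _ => ?_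
    calc (∑ v : Fin Ns → Ω l, A ⟨l, v⟩ * (fY ⟨l, v⟩ * fY ⟨l, v⟩))
        = p l * ∑ v : Fin Ns → Ω l,
            (∏ s, μ l (v s)) * ((∑ s, g l (v s)) * (∑ s, g l (v s))) := by
          simp only [hAdef, hfYdef]
          rw [Finset.mul_sum]
          exact Finset.sum_congr rfl fun v _ => by ring
      _ = p l * ((Ns : ℝ) * c2 l + ((Ns : ℝ) ^ 2 - (Ns : ℝ)) * (c1 l * c1 l)) := by
          rw [exp_sum_sq_const (μ l) (hμ1 l) (g l), Fintype.card_fin, hc1def, hc2def]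
  -- bounds on the per-index quantities
  have hΓ0 : 0 ≤ Γ := by
    rw [hΓdef]; exact Finset.prod_nonneg fun k _ => (hγ k).le
  have hsign : ∀ l : Fin K → Fin D, |Γ * ∏ k, Real.sign (a k (l k))| ≤ Γ := by
    intro l
    rw [abs_mul, abs_of_nonneg hΓ0]
    have h1 : |∏ k, Real.sign (a k (l k))| ≤ 1 := by
      rw [Finset.abs_prod]
      refine Finset.prod_le_one (fun k _ => abs_nonneg _) fun k _ => ?_
      rcases lt_trichotomy (a k (l k)) 0 with h | h | h
      · rw [Real.sign_of_neg h]; norm_num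
      · rw [h, Real.sign_zero]; norm_num
      · rw [Real.sign_of_pos h]; norm_num
    calc Γ * |∏ k, Real.sign (a k (l k))| ≤ Γ * 1 :=
          mul_le_mul_of_nonneg_left h1 hΓ0
      _ = Γ := mul_one Γ
  have htr : ∀ l : Fin K → Fin D,
      (∑ ω, μ l ω * ((O * ρhat l ω).trace).re)
        = ((O * compSeq (fun k => Φ k (l k)) ρ).trace).re := by
    intro l
    rw [← hsnap l, Finset.mul_sum]
    simp [Matrix.mul_smul, Matrix.trace_smul, Complex.re_sum]
  have htb : ∀ l : Fin K → Fin D,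
      |∑ ω, μ l ω * ((O * ρhat l ω).trace).re| ≤ b := by
    intro l
    rw [htr l]
    exact (Complex.abs_re_le_norm _).trans (hb' l)
  have hc1b : ∀ l, c1 l * c1 l ≤ Γ ^ 2 * b ^ 2 := by
    intro l
    have hfac : c1 l = (Γ * ∏ k, Real.sign (a k (l k)))
        * ∑ ω, μ l ω * ((O * ρhat l ω).trace).re := by
      rw [hc1def]
      simp only [hgdef]
      rw [Finset.mul_sum]
      exact Finset.sum_congr rfl fun ω _ => by ring
    have habs : |c1 l| ≤ Γ * b := by
      rw [hfac, abs_mul]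
      exact mul_le_mul (hsign l) (htb l) (abs_nonneg _) hΓ0
    calc c1 l * c1 l = |c1 l| * |c1 l| := (abs_mul_abs_self _).symm
      _ ≤ (Γ * b) * (Γ * b) := mul_self_le_mul_self (abs_nonneg _) habs
      _ = Γ ^ 2 * b ^ 2 := by ring
  have hc2b : ∀ l, c2 l ≤ Γ ^ 2 * B := by
    intro l
    have hfac : c2 l = (Γ * ∏ k, Real.sign (a k (l k))) ^ 2
        * ∑ ω, μ l ω * (((O * ρhat l ω).trace).re) ^ 2 := by
      rw [hc2def]
      simp only [hgdef]
      rw [Finset.mul_sum]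
      exact Finset.sum_congr rfl fun ω _ => by ring
    rw [hfac]
    have h1 : (Γ * ∏ k, Real.sign (a k (l k))) ^ 2 ≤ Γ ^ 2 := by
      rw [← sq_abs]
      exact pow_le_pow_left₀ (abs_nonneg _) (hsign l) 2
    have hT0 : 0 ≤ ∑ ω, μ l ω * (((O * ρhat l ω).trace).re) ^ 2 :=
      Finset.sum_nonneg fun ω _ => mul_nonneg (hμ0 l ω) (sq_nonneg _)
    exact mul_le_mul h1 (hB' l) hT0 (sq_nonneg Γ)
  -- bound E2
  have hNs1 : (1:ℝ) ≤ (Ns : ℝ) := by exact_mod_cast hNs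
  have hNsq : 0 ≤ (Ns : ℝ) ^ 2 - (Ns : ℝ) := by nlinarith
  have hE2b : E2 ≤ (Ns : ℝ) * (Γ ^ 2 * B) + ((Ns : ℝ) ^ 2 - (Ns : ℝ)) * (Γ ^ 2 * b ^ 2) := by
    rw [hE2v]
    calc (∑ l, p l * ((Ns : ℝ) * c2 l + ((Ns : ℝ) ^ 2 - (Ns : ℝ)) * (c1 l * c1 l)))
        ≤ ∑ l, p l * ((Ns : ℝ) * (Γ ^ 2 * B)
            + ((Ns : ℝ) ^ 2 - (Ns : ℝ)) * (Γ ^ 2 * b ^ 2)) := by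
          refine Finset.sum_le_sum fun l _ => mul_le_mul_of_nonneg_left ?_ (hp0 l)
          exact add_le_add (mul_le_mul_of_nonneg_left (hc2b l) hNspos.le)
            (mul_le_mul_of_nonneg_left (hc1b l) hNsq)
      _ = (Ns : ℝ) * (Γ ^ 2 * B) + ((Ns : ℝ) ^ 2 - (Ns : ℝ)) * (Γ ^ 2 * b ^ 2) := by
          rw [← Finset.sum_mul, hp1, one_mul]
  -- final arithmetic
  have key : c ^ 2 * ((M : ℝ) * E2 + ((M : ℝ) ^ 2 - (M : ℝ)) * (E1 * E1))
      - (c * ((M : ℝ) * E1)) ^ 2 = c ^ 2 * (M : ℝ) * E2 - c ^ 2 * (M : ℝ) * (E1 * E1) := by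
    ring
  rw [key]
  have h0 : 0 ≤ c ^ 2 * (M : ℝ) * (E1 * E1) :=
    mul_nonneg (mul_nonneg (sq_nonneg c) hMpos.le) (mul_self_nonneg E1)
  have hfin : c ^ 2 * (M : ℝ)
      * ((Ns : ℝ) * (Γ ^ 2 * B) + ((Ns : ℝ) ^ 2 - (Ns : ℝ)) * (Γ ^ 2 * b ^ 2))
      = Γ ^ 2 * ((B - b ^ 2) / ((M : ℝ) * (Ns : ℝ)) + b ^ 2 / (M : ℝ)) := by
    rw [hcdef]
    field_simp
    ring
  calc c ^ 2 * (M : ℝ) * E2 - c ^ 2 * (M : ℝ) * (E1 * E1)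
      ≤ c ^ 2 * (M : ℝ) * E2 := by linarith
    _ ≤ c ^ 2 * (M : ℝ)
        * ((Ns : ℝ) * (Γ ^ 2 * B) + ((Ns : ℝ) ^ 2 - (Ns : ℝ)) * (Γ ^ 2 * b ^ 2)) :=
        mul_le_mul_of_nonneg_left hE2b (by positivity)
    _ = Γ ^ 2 * ((B - b ^ 2) / ((M : ℝ) * (Ns : ℝ)) + b ^ 2 / (M : ℝ)) := hfin
end

section
/- Variance bound for the per-circuit shadow-averaged estimator (intermediate bound in the proof of Theorem 2): with the quasiprobability sampling setup and unbiased snapshot maps described in the context, assume there exist reals B ≥ 0 and b ≥ 0 such that for every multi-index l: Σ_{ω∈Ω_l} μ_l(ω) (Tr(O ρ̂_l(ω)))² ≤ B and |Tr(O Φ_l(ρ))| ≤ b. For N_s ≥ 1, define the random variable Y := Γ_l · (1/N_s) Σ_{s=1}^{N_s} Tr(O ρ̂_l(ω_s)), where l is drawn with probability p(l) and, given l, ω_1,…,ω_{N_s} are drawn independently from μ_l. Then Var[Y] ≤ (Γ²/N_s)·B + (1 − 1/N_s)·Γ²·b². -/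
open Matrix
open scoped BigOperators

/-- Second moment identity for i.i.d. sampling over a finite space. -/
lemma pair_sum_aux {Ω : Type*} [Fintype Ω] {Ns : ℕ} (μ : Ω → ℝ) (hμ1 : ∑ ω, μ ω = 1)
    (X : Ω → ℝ) (s s' : Fin Ns) :
    ∑ w : Fin Ns → Ω, (∏ t, μ (w t)) * (X (w s) * X (w s')) =
      if s = s' then ∑ ω, μ ω * X ω ^ 2 else (∑ ω, μ ω * X ω) ^ 2 := by
  have key : ∀ w : Fin Ns → Ω,
      (∏ t, μ (w t)) * (X (w s) * X (w s')) =
      ∏ t, (μ (w t) * ((if t = s then X (w t) else 1) * (if t = s' then X (w t) else 1))) := by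
    intro w
    rw [Finset.prod_mul_distrib, Finset.prod_mul_distrib,
      Finset.prod_ite_eq' Finset.univ s (fun t => X (w t)),
      Finset.prod_ite_eq' Finset.univ s' (fun t => X (w t))]
    simp [mul_assoc]
  have swap : ∑ w : Fin Ns → Ω,
      ∏ t, (μ (w t) * ((if t = s then X (w t) else 1) * (if t = s' then X (w t) else 1))) =
      ∏ t : Fin Ns, ∑ ω : Ω, (μ ω * ((if t = s then X ω else 1) * (if t = s' then X ω else 1))) := by
    rw [Finset.prod_univ_sum (fun _ => (Finset.univ : Finset Ω))
      (fun t ω => μ ω * ((if t = s then X ω else 1) * (if t = s' then X ω else 1)))]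
    rw [Fintype.piFinset_univ]
  rw [Finset.sum_congr rfl (fun w _ => key w), swap]
  by_cases hss : s = s'
  · subst hss
    rw [if_pos rfl]
    have : ∀ t : Fin Ns, (∑ ω : Ω, μ ω * ((if t = s then X ω else 1) * (if t = s then X ω else 1)))
        = if t = s then ∑ ω, μ ω * X ω ^ 2 else 1 := by
      intro t
      by_cases ht : t = s
      · simp [ht, sq]
      · simp [ht, hμ1]
    rw [Finset.prod_congr rfl (fun t _ => this t),
      Finset.prod_ite_eq' Finset.univ s (fun _ => ∑ ω, μ ω * X ω ^ 2)]
    simp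
  · rw [if_neg hss]
    have : ∀ t : Fin Ns, (∑ ω : Ω, μ ω * ((if t = s then X ω else 1) * (if t = s' then X ω else 1)))
        = (if t = s then ∑ ω, μ ω * X ω else 1) * (if t = s' then ∑ ω, μ ω * X ω else 1) := by
      intro t
      have hss' : ¬ s' = s := fun h => hss h.symm
      by_cases ht : t = s
      · have ht' : t ≠ s' := by rw [ht]; exact hss
        simp [ht, ht', hss, hss', Finset.sum_mul]
      · by_cases ht' : t = s'
        · simp [ht, ht', hss, hss', Finset.sum_mul]
        · simp [ht, ht', hμ1]
    rw [Finset.prod_congr rfl (fun t _ => this t), Finset.prod_mul_distrib,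
      Finset.prod_ite_eq' Finset.univ s (fun _ => ∑ ω, μ ω * X ω),
      Finset.prod_ite_eq' Finset.univ s' (fun _ => ∑ ω, μ ω * X ω)]
    simp [sq]

/-- Second moment of an average of i.i.d. samples. -/
lemma avg_sq_sum {Ω : Type*} [Fintype Ω] {Ns : ℕ} (μ : Ω → ℝ) (hμ1 : ∑ ω, μ ω = 1)
    (X : Ω → ℝ) :
    ∑ w : Fin Ns → Ω, (∏ t, μ (w t)) * (∑ s, X (w s)) ^ 2 =
      (Ns : ℝ) * (∑ ω, μ ω * X ω ^ 2) + ((Ns : ℝ) ^ 2 - Ns) * (∑ ω, μ ω * X ω) ^ 2 := by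
  have expand : ∀ w : Fin Ns → Ω,
      (∏ t, μ (w t)) * (∑ s, X (w s)) ^ 2 =
      ∑ s : Fin Ns, ∑ s' : Fin Ns, (∏ t, μ (w t)) * (X (w s) * X (w s')) := by
    intro w
    rw [sq, Finset.sum_mul_sum]
    rw [Finset.mul_sum]
    exact Finset.sum_congr rfl fun s _ => by rw [Finset.mul_sum]
  rw [Finset.sum_congr rfl (fun w _ => expand w)]
  rw [Finset.sum_comm]
  have : ∀ s : Fin Ns, ∑ w : Fin Ns → Ω, ∑ s' : Fin Ns, (∏ t, μ (w t)) * (X (w s) * X (w s'))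
      = ∑ s' : Fin Ns, if s = s' then ∑ ω, μ ω * X ω ^ 2 else (∑ ω, μ ω * X ω) ^ 2 := by
    intro s
    rw [Finset.sum_comm]
    exact Finset.sum_congr rfl fun s' _ => pair_sum_aux μ hμ1 X s s'
  rw [Finset.sum_congr rfl (fun s _ => this s)]
  set A := ∑ ω, μ ω * X ω ^ 2
  set C := (∑ ω, μ ω * X ω) ^ 2
  have : ∀ s : Fin Ns, (∑ s' : Fin Ns, if s = s' then A else C)
      = A + ((Ns : ℝ) - 1) * C := by
    intro s
    have : ∀ s' : Fin Ns, (if s = s' then A else C) = C + (if s' = s then A - C else 0) := by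
      intro s'
      by_cases h : s = s' <;> simp [h, eq_comm] <;> ring
    rw [Finset.sum_congr rfl (fun s' _ => this s'), Finset.sum_add_distrib,
      Finset.sum_ite_eq' Finset.univ s (fun _ => A - C)]
    simp
    ring
  rw [Finset.sum_congr rfl (fun s _ => this s)]
  simp
  ring

lemma abs_sign_le_one (x : ℝ) : |Real.sign x| ≤ 1 := by
  rcases Real.sign_apply_eq x with h | h | h <;> rw [h] <;> norm_num

/-- **Variance bound for the per-circuit shadow-averaged estimator** (intermediate bound in
the proof of Theorem 2): for `Y := Γ_l (1/N_s) Σ_s Tr(O ρ̂_l(ω_s))`, where `l` is drawn with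
probability `p(l)` and, given `l`, the `ω_s` are i.i.d. from `μ_l`,
`Var[Y] ≤ (Γ²/N_s) B + (1 − 1/N_s) Γ² b²`. -/
theorem per_circuit_shadow_averaged_variance_bound
    (n K D : ℕ) (hn : 1 ≤ n) (hD : 1 ≤ D)
    (a : Fin K → Fin D → ℝ)
    (Φ : Fin K → Fin D → (Matrix (Fin n) (Fin n) ℂ →ₗ[ℂ] Matrix (Fin n) (Fin n) ℂ))
    (hγ : ∀ k, 0 < ∑ d, |a k d|)
    (ρ : Matrix (Fin n) (Fin n) ℂ)
    (O : Matrix (Fin n) (Fin n) ℂ) (hO : O.IsHermitian)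
    (Ω : (Fin K → Fin D) → Type) [∀ l, Fintype (Ω l)]
    (μ : ∀ l, Ω l → ℝ)
    (hμ0 : ∀ l ω, 0 ≤ μ l ω) (hμ1 : ∀ l, ∑ ω, μ l ω = 1)
    (ρhat : ∀ l, Ω l → Matrix (Fin n) (Fin n) ℂ)
    (hherm : ∀ l ω, (ρhat l ω).IsHermitian)
    (hsnap : ∀ l, ∑ ω, μ l ω • ρhat l ω = compSeq (fun k => Φ k (l k)) ρ)
    (B b : ℝ) (hB : 0 ≤ B) (hb : 0 ≤ b)
    (hB' : ∀ l : Fin K → Fin D,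
      ∑ ω, μ l ω * (((O * ρhat l ω).trace).re) ^ 2 ≤ B)
    (hb' : ∀ l : Fin K → Fin D,
      ‖(O * compSeq (fun k => Φ k (l k)) ρ).trace‖ ≤ b)
    (Ns : ℕ) (hNs : 1 ≤ Ns) :
    (∑ l : Fin K → Fin D,
        (∏ k, |a k (l k)| / (∑ d, |a k d|)) *
          ∑ w : Fin Ns → Ω l,
            (∏ s, μ l (w s)) *
              (((∏ k, (∑ d, |a k d|)) * ∏ k, Real.sign (a k (l k))) *
                ((1 / (Ns : ℝ)) * ∑ s, ((O * ρhat l (w s)).trace).re)) ^ 2)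
      - (∑ l : Fin K → Fin D,
          (∏ k, |a k (l k)| / (∑ d, |a k d|)) *
            ∑ w : Fin Ns → Ω l,
              (∏ s, μ l (w s)) *
                (((∏ k, (∑ d, |a k d|)) * ∏ k, Real.sign (a k (l k))) *
                  ((1 / (Ns : ℝ)) * ∑ s, ((O * ρhat l (w s)).trace).re))) ^ 2
      ≤ ((∏ k, (∑ d, |a k d|)) ^ 2 / (Ns : ℝ)) * B
        + (1 - 1 / (Ns : ℝ)) * (∏ k, (∑ d, |a k d|)) ^ 2 * b ^ 2 := by
  set Γ : ℝ := ∏ k, (∑ d, |a k d|) with hΓdef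
  have hNs0 : (0 : ℝ) < (Ns : ℝ) := by positivity
  have hNsne : (Ns : ℝ) ≠ 0 := hNs0.ne'
  have hNs1 : (1 : ℝ) ≤ (Ns : ℝ) := by exact_mod_cast hNs
  -- drop the mean-square term
  apply le_trans (sub_le_self _ (sq_nonneg _))
  -- probabilities sum to 1
  have hpsum : ∑ l : Fin K → Fin D, (∏ k, |a k (l k)| / (∑ d, |a k d|)) = 1 := by
    rw [← Fintype.piFinset_univ,
      ← Finset.prod_univ_sum (fun _ => (Finset.univ : Finset (Fin D)))
        (fun k d => |a k d| / (∑ d', |a k d'|))]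
    rw [Finset.prod_eq_one]
    intro k _
    rw [← Finset.sum_div, div_self (hγ k).ne']
  set bound : ℝ := Γ ^ 2 * ((1 / (Ns : ℝ)) * B + (1 - 1 / (Ns : ℝ)) * b ^ 2) with hbounddef
  have hbound0 : 0 ≤ bound := by
    apply mul_nonneg (sq_nonneg _)
    have h1 : (0:ℝ) ≤ 1 - 1 / (Ns : ℝ) := by
      rw [sub_nonneg]
      rw [div_le_one hNs0]; exact hNs1
    positivity
  have main : ∀ l : Fin K → Fin D,
      (∏ k, |a k (l k)| / (∑ d, |a k d|)) *
          ∑ w : Fin Ns → Ω l,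
            (∏ s, μ l (w s)) *
              ((Γ * ∏ k, Real.sign (a k (l k))) *
                ((1 / (Ns : ℝ)) * ∑ s, ((O * ρhat l (w s)).trace).re)) ^ 2
      ≤ (∏ k, |a k (l k)| / (∑ d, |a k d|)) * bound := by
    intro l
    have hp0 : 0 ≤ ∏ k, |a k (l k)| / (∑ d, |a k d|) := by
      apply Finset.prod_nonneg
      intro k _
      exact div_nonneg (abs_nonneg _) (hγ k).le
    apply mul_le_mul_of_nonneg_left _ hp0
    -- per-l second moment bound
    set X : Ω l → ℝ := fun ω => ((O * ρhat l ω).trace).re with hXdef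
    have hmean : ∑ ω, μ l ω * X ω = ((O * compSeq (fun k => Φ k (l k)) ρ).trace).re := by
      rw [← hsnap l, Matrix.mul_sum, Matrix.trace_sum, Complex.re_sum]
      apply Finset.sum_congr rfl
      intro ω _
      rw [Matrix.mul_smul, Matrix.trace_smul]
      simp [Complex.real_smul, X]
    have hm2 : (∑ ω, μ l ω * X ω) ^ 2 ≤ b ^ 2 := by
      rw [hmean]
      have h1 : |((O * compSeq (fun k => Φ k (l k)) ρ).trace).re| ≤ b :=
        le_trans (Complex.abs_re_le_norm _) (hb' l)
      calc ((O * compSeq (fun k => Φ k (l k)) ρ).trace).re ^ 2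
          = |((O * compSeq (fun k => Φ k (l k)) ρ).trace).re| ^ 2 := (sq_abs _).symm
        _ ≤ b ^ 2 := by apply pow_le_pow_left₀ (abs_nonneg _) h1
    have hS2 : (∏ k, Real.sign (a k (l k))) ^ 2 ≤ 1 := by
      have : |∏ k, Real.sign (a k (l k))| ≤ 1 := by
        rw [Finset.abs_prod]
        apply Finset.prod_le_one
        · intro k _; exact abs_nonneg _
        · intro k _; exact abs_sign_le_one _
      calc (∏ k, Real.sign (a k (l k))) ^ 2 = |∏ k, Real.sign (a k (l k))| ^ 2 := (sq_abs _).symm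
        _ ≤ 1 ^ 2 := by apply pow_le_pow_left₀ (abs_nonneg _) this
        _ = 1 := one_pow 2
    -- rewrite the inner sum
    have hrw : ∑ w : Fin Ns → Ω l,
        (∏ s, μ l (w s)) *
          ((Γ * ∏ k, Real.sign (a k (l k))) *
            ((1 / (Ns : ℝ)) * ∑ s, X (w s))) ^ 2
        = (Γ * ∏ k, Real.sign (a k (l k))) ^ 2 * ((1 / (Ns : ℝ)) ^ 2 *
          ∑ w : Fin Ns → Ω l, (∏ s, μ l (w s)) * (∑ s, X (w s)) ^ 2) := by
      rw [Finset.mul_sum, Finset.mul_sum]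
      apply Finset.sum_congr rfl
      intro w _
      ring
    rw [hrw, avg_sq_sum (μ l) (hμ1 l) X]
    have hE2 : ∑ ω, μ l ω * X ω ^ 2 ≤ B := hB' l
    have step : (1 / (Ns : ℝ)) ^ 2 *
        ((Ns : ℝ) * (∑ ω, μ l ω * X ω ^ 2) + ((Ns : ℝ) ^ 2 - Ns) * (∑ ω, μ l ω * X ω) ^ 2)
        ≤ (1 / (Ns : ℝ)) * B + (1 - 1 / (Ns : ℝ)) * b ^ 2 := by
      have hc : (0:ℝ) ≤ (Ns : ℝ) ^ 2 - Ns := by nlinarith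
      have h1 : (Ns : ℝ) * (∑ ω, μ l ω * X ω ^ 2) + ((Ns : ℝ) ^ 2 - Ns) * (∑ ω, μ l ω * X ω) ^ 2
          ≤ (Ns : ℝ) * B + ((Ns : ℝ) ^ 2 - Ns) * b ^ 2 := by
        apply add_le_add
        · exact mul_le_mul_of_nonneg_left hE2 hNs0.le
        · exact mul_le_mul_of_nonneg_left hm2 hc
      calc (1 / (Ns : ℝ)) ^ 2 *
          ((Ns : ℝ) * (∑ ω, μ l ω * X ω ^ 2) + ((Ns : ℝ) ^ 2 - Ns) * (∑ ω, μ l ω * X ω) ^ 2)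
          ≤ (1 / (Ns : ℝ)) ^ 2 * ((Ns : ℝ) * B + ((Ns : ℝ) ^ 2 - Ns) * b ^ 2) := by
            apply mul_le_mul_of_nonneg_left h1 (by positivity)
        _ = (1 / (Ns : ℝ)) * B + (1 - 1 / (Ns : ℝ)) * b ^ 2 := by
            field_simp
    have hGS : (Γ * ∏ k, Real.sign (a k (l k))) ^ 2 ≤ Γ ^ 2 := by
      rw [mul_pow]
      calc Γ ^ 2 * (∏ k, Real.sign (a k (l k))) ^ 2 ≤ Γ ^ 2 * 1 :=
        mul_le_mul_of_nonneg_left hS2 (sq_nonneg _)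
        _ = Γ ^ 2 := mul_one _
    have hinner0 : 0 ≤ (1 / (Ns : ℝ)) ^ 2 *
        ((Ns : ℝ) * (∑ ω, μ l ω * X ω ^ 2) + ((Ns : ℝ) ^ 2 - Ns) * (∑ ω, μ l ω * X ω) ^ 2) := by
      apply mul_nonneg (sq_nonneg _)
      have : 0 ≤ ∑ ω, μ l ω * X ω ^ 2 := by
        apply Finset.sum_nonneg
        intro ω _
        exact mul_nonneg (hμ0 l ω) (sq_nonneg _)
      have hc : (0:ℝ) ≤ (Ns : ℝ) ^ 2 - Ns := by nlinarith
      positivity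
    calc (Γ * ∏ k, Real.sign (a k (l k))) ^ 2 * ((1 / (Ns : ℝ)) ^ 2 *
          ((Ns : ℝ) * (∑ ω, μ l ω * X ω ^ 2) + ((Ns : ℝ) ^ 2 - Ns) * (∑ ω, μ l ω * X ω) ^ 2))
        ≤ Γ ^ 2 * ((1 / (Ns : ℝ)) ^ 2 *
          ((Ns : ℝ) * (∑ ω, μ l ω * X ω ^ 2) + ((Ns : ℝ) ^ 2 - Ns) * (∑ ω, μ l ω * X ω) ^ 2)) :=
          mul_le_mul_of_nonneg_right hGS hinner0
      _ ≤ Γ ^ 2 * ((1 / (Ns : ℝ)) * B + (1 - 1 / (Ns : ℝ)) * b ^ 2) :=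
          mul_le_mul_of_nonneg_left step (sq_nonneg _)
      _ = bound := rfl
  calc (∑ l : Fin K → Fin D,
        (∏ k, |a k (l k)| / (∑ d, |a k d|)) *
          ∑ w : Fin Ns → Ω l,
            (∏ s, μ l (w s)) *
              ((Γ * ∏ k, Real.sign (a k (l k))) *
                ((1 / (Ns : ℝ)) * ∑ s, ((O * ρhat l (w s)).trace).re)) ^ 2)
      ≤ ∑ l : Fin K → Fin D, (∏ k, |a k (l k)| / (∑ d, |a k d|)) * bound :=
        Finset.sum_le_sum fun l _ => main l
    _ = bound := by rw [← Finset.sum_mul, hpsum, one_mul]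
    _ = ((∏ k, (∑ d, |a k d|)) ^ 2 / (Ns : ℝ)) * B
        + (1 - 1 / (Ns : ℝ)) * (∏ k, (∑ d, |a k d|)) ^ 2 * b ^ 2 := by
        rw [hbounddef, hΓdef]
        ring
end

section
/- TE-PAI decomposition of a Pauli rotation channel: let P be an n×n complex matrix that is Hermitian and satisfies P² = I, and for θ ∈ ℝ define R_θ := cos(θ/2)·I − i·sin(θ/2)·P. Then for every Δ ∈ (0, π), every θ ∈ ℝ, and every n×n complex matrix ρ, R_θ ρ R_θ* = a₁(θ)·ρ + a₂(θ)·R_Δ ρ R_Δ* + a₃(θ)·P ρ P, where * denotes conjugate transpose (note R_π ρ R_π* = P ρ P). -/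
open Matrix

/-- TE-PAI coefficient `a₁(θ) = csc(Δ/2)·cos(θ/2)·sin(Δ/2 − θ/2)`. -/
noncomputable def tepaiA1 (Δ θ : ℝ) : ℝ :=
  (Real.sin (Δ / 2))⁻¹ * Real.cos (θ / 2) * Real.sin (Δ / 2 - θ / 2)

/-- TE-PAI coefficient `a₂(θ) = csc(Δ)·sin(θ)`. -/
noncomputable def tepaiA2 (Δ θ : ℝ) : ℝ :=
  (Real.sin Δ)⁻¹ * Real.sin θ

/-- TE-PAI coefficient `a₃(θ) = −sec(Δ/2)·sin(θ/2)·sin(Δ/2 − θ/2)`. -/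
noncomputable def tepaiA3 (Δ θ : ℝ) : ℝ :=
  -((Real.cos (Δ / 2))⁻¹ * Real.sin (θ / 2) * Real.sin (Δ / 2 - θ / 2))

/-- The Pauli rotation `R_θ = cos(θ/2)·I − i·sin(θ/2)·P`. -/
noncomputable def pauliRot {n : ℕ} (P : Matrix (Fin n) (Fin n) ℂ) (θ : ℝ) :
    Matrix (Fin n) (Fin n) ℂ :=
  (Real.cos (θ / 2) : ℂ) • (1 : Matrix (Fin n) (Fin n) ℂ)
    - (Complex.I * (Real.sin (θ / 2) : ℂ)) • P

lemma pauliRot_conj_expand {n : ℕ} (P : Matrix (Fin n) (Fin n) ℂ) (hP : P.IsHermitian)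
    (ρ : Matrix (Fin n) (Fin n) ℂ) (φ : ℝ) :
    pauliRot P φ * ρ * (pauliRot P φ)ᴴ
      = ((Real.cos (φ/2) : ℂ)^2) • ρ + ((Real.sin (φ/2) : ℂ)^2) • (P * (ρ * P))
        + (Complex.I * Real.cos (φ/2) * Real.sin (φ/2)) • (ρ * P)
        - (Complex.I * Real.cos (φ/2) * Real.sin (φ/2)) • (P * ρ) := by
  simp only [pauliRot, conjTranspose_sub, conjTranspose_smul, conjTranspose_one, hP.eq,
    star_mul', Complex.star_def, Complex.conj_I, Complex.conj_ofReal]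
  simp only [sub_mul, mul_sub, smul_mul_assoc, mul_smul_comm, one_mul, Matrix.mul_one,
    Matrix.mul_assoc]
  match_scalars <;> ring_nf <;> simp [Complex.I_sq]

/-- **TE-PAI decomposition of a Pauli rotation channel**: for Hermitian `P` with `P² = I`,
`R_θ ρ R_θ* = a₁(θ)·ρ + a₂(θ)·R_Δ ρ R_Δ* + a₃(θ)·P ρ P`. -/
theorem tepai_decomposition
    (n : ℕ) (P : Matrix (Fin n) (Fin n) ℂ) (hP : P.IsHermitian)
    (hP2 : P * P = 1)
    (Δ : ℝ) (hΔ : Δ ∈ Set.Ioo 0 Real.pi) (θ : ℝ)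
    (ρ : Matrix (Fin n) (Fin n) ℂ) :
    pauliRot P θ * ρ * (pauliRot P θ)ᴴ
      = (tepaiA1 Δ θ : ℂ) • ρ
        + (tepaiA2 Δ θ : ℂ) • (pauliRot P Δ * ρ * (pauliRot P Δ)ᴴ)
        + (tepaiA3 Δ θ : ℂ) • (P * ρ * P) := by
  obtain ⟨h0, hpi⟩ := hΔ
  have hS : 0 < Real.sin (Δ/2) :=
    Real.sin_pos_of_pos_of_lt_pi (by linarith) (by linarith [Real.pi_pos])
  have hC : 0 < Real.cos (Δ/2) :=
    Real.cos_pos_of_mem_Ioo ⟨by linarith [Real.pi_pos], by linarith⟩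
  have hsinΔ : Real.sin Δ = 2 * Real.sin (Δ/2) * Real.cos (Δ/2) := by
    rw [← Real.sin_two_mul]; ring_nf
  have hsinθ : Real.sin θ = 2 * Real.sin (θ/2) * Real.cos (θ/2) := by
    rw [← Real.sin_two_mul]; ring_nf
  have h1 : Real.cos (θ/2)^2 = tepaiA1 Δ θ + tepaiA2 Δ θ * Real.cos (Δ/2)^2 := by
    simp only [tepaiA1, tepaiA2]
    rw [hsinΔ, hsinθ, Real.sin_sub]
    field_simp; ring
  have h2 : Real.sin (θ/2)^2 = tepaiA2 Δ θ * Real.sin (Δ/2)^2 + tepaiA3 Δ θ := by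
    simp only [tepaiA2, tepaiA3]
    rw [hsinΔ, hsinθ, Real.sin_sub]
    field_simp; ring
  have h3 : Real.cos (θ/2) * Real.sin (θ/2)
      = tepaiA2 Δ θ * (Real.cos (Δ/2) * Real.sin (Δ/2)) := by
    simp only [tepaiA2]
    rw [hsinΔ, hsinθ]
    field_simp
  have hc1 : ((Real.cos (θ/2) : ℂ))^2
      = (tepaiA1 Δ θ : ℂ) + (tepaiA2 Δ θ : ℂ) * (Real.cos (Δ/2) : ℂ)^2 := by
    exact_mod_cast congrArg (Complex.ofReal) h1
  have hc2 : ((Real.sin (θ/2) : ℂ))^2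
      = (tepaiA2 Δ θ : ℂ) * (Real.sin (Δ/2) : ℂ)^2 + (tepaiA3 Δ θ : ℂ) := by
    exact_mod_cast congrArg (Complex.ofReal) h2
  have hc3 : (Real.cos (θ/2) : ℂ) * (Real.sin (θ/2) : ℂ)
      = (tepaiA2 Δ θ : ℂ) * ((Real.cos (Δ/2) : ℂ) * (Real.sin (Δ/2) : ℂ)) := by
    exact_mod_cast congrArg (Complex.ofReal) h3
  push_cast at hc1 hc2 hc3
  rw [pauliRot_conj_expand P hP ρ θ, pauliRot_conj_expand P hP ρ Δ, ← Matrix.mul_assoc]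
  match_scalars
  · linear_combination hc1
  · linear_combination hc2
  · linear_combination Complex.I * hc3
  · linear_combination -Complex.I * hc3
end

section
/- Signs of the TE-PAI coefficients and closed form of the normalization factor: for every Δ ∈ (0, π) and every θ with 0 < θ < Δ, one has a₁(θ) > 0, a₂(θ) > 0, and a₃(θ) < 0; consequently γ(θ) := |a₁(θ)| + |a₂(θ)| + |a₃(θ)| = 1 + 2·sec(Δ/2)·sin(θ/2)·sin(Δ/2 − θ/2). -/
/-- TE-PAI normalization factor `γ(θ) = |a₁(θ)| + |a₂(θ)| + |a₃(θ)|`. -/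
noncomputable def tepaiGamma (Δ θ : ℝ) : ℝ :=
  |tepaiA1 Δ θ| + |tepaiA2 Δ θ| + |tepaiA3 Δ θ|

/-- **Signs of the TE-PAI coefficients and closed form of the normalization factor**:
for `Δ ∈ (0, π)` and `0 < θ < Δ`, one has `a₁(θ) > 0`, `a₂(θ) > 0`, `a₃(θ) < 0`, and
`γ(θ) = 1 + 2·sec(Δ/2)·sin(θ/2)·sin(Δ/2 − θ/2)`. -/
theorem tepai_coefficient_signs_and_gamma
    (Δ : ℝ) (hΔ : Δ ∈ Set.Ioo 0 Real.pi) (θ : ℝ) (hθ0 : 0 < θ) (hθΔ : θ < Δ) :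
    0 < tepaiA1 Δ θ ∧ 0 < tepaiA2 Δ θ ∧ tepaiA3 Δ θ < 0 ∧
      tepaiGamma Δ θ
        = 1 + 2 * ((Real.cos (Δ / 2))⁻¹ * Real.sin (θ / 2) * Real.sin (Δ / 2 - θ / 2)) := by
  obtain ⟨hΔ0, hΔπ⟩ := hΔ
  have hpi := Real.pi_pos
  have hs : 0 < Real.sin (Δ / 2) := Real.sin_pos_of_pos_of_lt_pi (by linarith) (by linarith)
  have hc : 0 < Real.cos (Δ / 2) := Real.cos_pos_of_mem_Ioo ⟨by linarith, by linarith⟩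
  have hsΔ : 0 < Real.sin Δ := Real.sin_pos_of_pos_of_lt_pi hΔ0 hΔπ
  have hsθ : 0 < Real.sin θ := Real.sin_pos_of_pos_of_lt_pi hθ0 (by linarith)
  have hs2 : 0 < Real.sin (θ / 2) := Real.sin_pos_of_pos_of_lt_pi (by linarith) (by linarith)
  have hc2 : 0 < Real.cos (θ / 2) := Real.cos_pos_of_mem_Ioo ⟨by linarith, by linarith⟩
  have hd : 0 < Real.sin (Δ / 2 - θ / 2) :=
    Real.sin_pos_of_pos_of_lt_pi (by linarith) (by linarith)
  have h1 : 0 < tepaiA1 Δ θ := by unfold tepaiA1; positivity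
  have h2 : 0 < tepaiA2 Δ θ := by unfold tepaiA2; positivity
  have h3 : tepaiA3 Δ θ < 0 := by unfold tepaiA3; simp only [neg_neg, neg_lt_zero]; positivity
  refine ⟨h1, h2, h3, ?_⟩
  have hsum : tepaiA1 Δ θ + tepaiA2 Δ θ + tepaiA3 Δ θ = 1 := by
    unfold tepaiA1 tepaiA2 tepaiA3
    have e1 : Real.sin Δ = 2 * Real.sin (Δ / 2) * Real.cos (Δ / 2) := by
      rw [← Real.sin_two_mul]; ring_nf
    have e2 : Real.sin θ = 2 * Real.sin (θ / 2) * Real.cos (θ / 2) := by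
      rw [← Real.sin_two_mul]; ring_nf
    have e3 : Real.sin (Δ / 2 - θ / 2)
        = Real.sin (Δ / 2) * Real.cos (θ / 2) - Real.cos (Δ / 2) * Real.sin (θ / 2) :=
      Real.sin_sub _ _
    have p1 := Real.sin_sq_add_cos_sq (Δ / 2)
    have p2 := Real.sin_sq_add_cos_sq (θ / 2)
    rw [e1, e2, e3]
    field_simp
    linear_combination (Real.sin (Δ / 2) * Real.cos (Δ / 2)) * p2 -
      (Real.sin (θ / 2) * Real.cos (θ / 2)) * p1
  rw [tepaiGamma, abs_of_pos h1, abs_of_pos h2, abs_of_neg h3]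
  have : tepaiA3 Δ θ = -((Real.cos (Δ / 2))⁻¹ * Real.sin (θ / 2) * Real.sin (Δ / 2 - θ / 2)) :=
    rfl
  linarith [hsum, this.ge, this.le]
end

section
/- Large-K limit of the TE-PAI measurement overhead: for every Δ ∈ (0, π) and every real c ≥ 0, the sequence K ↦ (γ(c/K))^{2K} (over positive integers K) converges, as K → ∞, to exp(2·c·tan(Δ/2)). In particular, for a Hamiltonian with coefficient 1-norm ‖H‖₁ and evolution time t, taking c = t·‖H‖₁ recovers the asymptotic overhead Γ² → exp(2·t·‖H‖₁·tan(Δ/2)). -/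
open Filter

lemma tepaiGamma_eq (Δ θ : ℝ) (hΔ : Δ ∈ Set.Ioo 0 Real.pi) (hθ0 : 0 ≤ θ) (hθΔ : θ ≤ Δ) :
    tepaiGamma Δ θ = Real.cos (Δ / 2 - θ) / Real.cos (Δ / 2) := by
  obtain ⟨hΔ0, hΔπ⟩ := hΔ
  have hsa : 0 < Real.sin (Δ / 2) :=
    Real.sin_pos_of_pos_of_lt_pi (by linarith) (by linarith [Real.pi_pos])
  have hca : 0 < Real.cos (Δ / 2) :=
    Real.cos_pos_of_mem_Ioo ⟨by linarith [Real.pi_pos], by linarith⟩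
  have hct : 0 ≤ Real.cos (θ / 2) :=
    Real.cos_nonneg_of_mem_Icc ⟨by linarith [Real.pi_pos], by linarith⟩
  have hst : 0 ≤ Real.sin (θ / 2) :=
    Real.sin_nonneg_of_nonneg_of_le_pi (by linarith) (by linarith)
  have hs : 0 ≤ Real.sin (Δ / 2 - θ / 2) :=
    Real.sin_nonneg_of_nonneg_of_le_pi (by linarith) (by linarith)
  have hsθ : 0 ≤ Real.sin θ := Real.sin_nonneg_of_nonneg_of_le_pi hθ0 (by linarith)
  have hsΔ : 0 < Real.sin Δ := Real.sin_pos_of_pos_of_lt_pi hΔ0 hΔπ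
  have h1 : |tepaiA1 Δ θ| = tepaiA1 Δ θ := abs_of_nonneg (by
    unfold tepaiA1; positivity)
  have h2 : |tepaiA2 Δ θ| = tepaiA2 Δ θ := abs_of_nonneg (by
    unfold tepaiA2; positivity)
  have h3 : |tepaiA3 Δ θ| = -tepaiA3 Δ θ := abs_of_nonpos (by
    unfold tepaiA3
    simp only [neg_nonpos]
    positivity)
  unfold tepaiGamma
  rw [h1, h2, h3]
  unfold tepaiA1 tepaiA2 tepaiA3
  rw [neg_neg]
  have e1 : Real.sin Δ = 2 * Real.sin (Δ / 2) * Real.cos (Δ / 2) := by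
    conv_lhs => rw [show Δ = 2 * (Δ / 2) by ring]
    rw [Real.sin_two_mul]
  have e2 : Real.sin θ = 2 * Real.sin (θ / 2) * Real.cos (θ / 2) := by
    conv_lhs => rw [show θ = 2 * (θ / 2) by ring]
    rw [Real.sin_two_mul]
  have e0 : Real.cos θ = 2 * Real.cos (θ / 2) ^ 2 - 1 := by
    conv_lhs => rw [show θ = 2 * (θ / 2) by ring]
    rw [Real.cos_two_mul]
  have e3 : Real.cos (Δ / 2 - θ) =
      Real.cos (Δ / 2) * (2 * Real.cos (θ / 2) ^ 2 - 1)
        + Real.sin (Δ / 2) * (2 * Real.sin (θ / 2) * Real.cos (θ / 2)) := by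
    rw [Real.cos_sub, e0, e2]
  rw [e1, e2, e3, Real.sin_sub]
  set a := Δ / 2
  set t := θ / 2
  field_simp
  linear_combination (-(Real.sin a*Real.cos a))*(Real.sin_sq_add_cos_sq t) + (-(Real.cos t*Real.sin t))*(Real.sin_sq_add_cos_sq a)

/-- **Large-`K` limit of the TE-PAI measurement overhead**: for every `Δ ∈ (0, π)` and
every `c ≥ 0`, the sequence `K ↦ (γ(c/K))^(2K)` converges to `exp(2·c·tan(Δ/2))`
as `K → ∞`.  (Taking `c = t·‖H‖₁` recovers `Γ² → exp(2·t·‖H‖₁·tan(Δ/2))`.) -/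
theorem tepai_overhead_limit (Δ : ℝ) (hΔ : Δ ∈ Set.Ioo 0 Real.pi) (c : ℝ) (hc : 0 ≤ c) :
    Tendsto (fun K : ℕ => (tepaiGamma Δ (c / K)) ^ (2 * K)) atTop
      (nhds (Real.exp (2 * c * Real.tan (Δ / 2)))) := by
  obtain ⟨hΔ0, hΔπ⟩ := hΔ
  have hca : 0 < Real.cos (Δ / 2) :=
    Real.cos_pos_of_mem_Ioo ⟨by linarith [Real.pi_pos], by linarith⟩
  rcases eq_or_lt_of_le hc with rfl | hc'
  · -- c = 0
    have hg : tepaiGamma Δ 0 = 1 := by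
      rw [tepaiGamma_eq Δ 0 ⟨hΔ0, hΔπ⟩ le_rfl hΔ0.le]
      simp [div_self hca.ne']
    simp only [zero_div, hg, one_pow, mul_zero, zero_mul, Real.exp_zero]
    exact tendsto_const_nhds
  · -- c > 0
    set g : ℝ → ℝ := fun θ => Real.log (Real.cos (Δ / 2 - θ)) with hgdef
    have hderiv : HasDerivAt g (Real.tan (Δ / 2)) 0 := by
      have h1 : HasDerivAt (fun θ : ℝ => Δ / 2 - θ) (-1) 0 := by
        simpa using (hasDerivAt_id (0:ℝ)).const_sub (Δ/2)
      have h2 : HasDerivAt Real.cos (-Real.sin (Δ / 2 - 0)) (Δ / 2 - 0) :=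
        Real.hasDerivAt_cos _
      have h3 := h2.comp 0 h1
      have hne : Real.cos (Δ / 2 - 0) ≠ 0 := by rw [sub_zero]; exact hca.ne'
      have h4 := (Real.hasDerivAt_log hne).comp 0 h3
      refine h4.congr_deriv ?_
      rw [Real.tan_eq_sin_div_cos, sub_zero]
      field_simp
    rw [hasDerivAt_iff_tendsto_slope] at hderiv
    have htends : Tendsto (fun K : ℕ => c / K) atTop (nhdsWithin 0 {(0:ℝ)}ᶜ) := by
      rw [tendsto_nhdsWithin_iff]
      refine ⟨tendsto_const_div_atTop_nhds_zero_nat c, ?_⟩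
      filter_upwards [eventually_ge_atTop 1] with K hK
      have hK0 : (0:ℝ) < K := by exact_mod_cast hK
      exact div_ne_zero hc'.ne' hK0.ne'
    have hcomp := hderiv.comp htends
    have hmul := hcomp.const_mul (2 * c)
    have hexp := (Real.continuous_exp.tendsto _).comp hmul
    refine hexp.congr' ?_
    filter_upwards [eventually_ge_atTop (⌈c / Δ⌉₊ + 1)] with K hK
    have hK1 : 1 ≤ K := le_trans (Nat.le_add_left 1 _) hK
    have hK0 : (0:ℝ) < K := by exact_mod_cast hK1
    have hcK0 : 0 < c / K := div_pos hc' hK0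
    have hcKΔ : c / K ≤ Δ := by
      rw [div_le_iff₀ hK0]
      have h5 : (⌈c / Δ⌉₊ : ℝ) ≤ K := by exact_mod_cast le_trans (Nat.le_add_right _ 1) hK
      have h6 : c / Δ ≤ K := le_trans (Nat.le_ceil _) h5
      calc c = c / Δ * Δ := by field_simp
        _ ≤ K * Δ := by nlinarith
        _ = Δ * K := by ring
    have hcpos : 0 < Real.cos (Δ / 2 - c / K) := by
      apply Real.cos_pos_of_mem_Ioo
      constructor
      · have : -(Δ/2) ≤ Δ / 2 - c / K := by linarith
        linarith
      · linarith [hcK0]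
    have hγ : tepaiGamma Δ (c / K) = Real.cos (Δ / 2 - c / K) / Real.cos (Δ / 2) :=
      tepaiGamma_eq Δ (c / K) ⟨hΔ0, hΔπ⟩ hcK0.le hcKΔ
    have hγpos : 0 < tepaiGamma Δ (c / K) := by rw [hγ]; positivity
    -- now compute
    show Real.exp (2 * c * slope g 0 (c / K)) = tepaiGamma Δ (c / K) ^ (2 * K)
    have hslope : slope g 0 (c / K) = (g (c / K) - g 0) / (c / K) := by
      rw [slope_def_field]; rw [sub_zero]
    have hlog : g (c / K) - g 0 = Real.log (tepaiGamma Δ (c / K)) := by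
      rw [hγ, Real.log_div hcpos.ne' hca.ne', hgdef]
      simp
    have harg : 2 * c * slope g 0 (c / K) = (2 * K : ℕ) * Real.log (tepaiGamma Δ (c / K)) := by
      rw [hslope, hlog]
      push_cast
      field_simp
    rw [harg, Real.exp_nat_mul, Real.exp_log hγpos]
end

section
/- Large-K limit of the expected TE-PAI gate count per rotation: for every Δ ∈ (0, π) and every real c ≥ 0, defining p₁(θ) := |a₁(θ)|/γ(θ) (the probability of skipping the gate), the sequence K ↦ K·(1 − p₁(c/K)) (over positive integers K) converges, as K → ∞, to c·(3 − cos Δ)/(2·sin Δ). -/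
open Filter

/-- The probability `p₁(θ) = |a₁(θ)|/γ(θ)` of replacing the rotation by the identity
(skipping the gate) in TE-PAI. -/
noncomputable def tepaiP1 (Δ θ : ℝ) : ℝ := |tepaiA1 Δ θ| / tepaiGamma Δ θ

/-- **Large-`K` limit of the expected TE-PAI gate count per rotation**: for every
`Δ ∈ (0, π)` and every `c ≥ 0`, the sequence `K ↦ K·(1 − p₁(c/K))` converges to
`c·(3 − cos Δ)/(2·sin Δ)` as `K → ∞`. -/
theorem tepai_gate_count_limit (Δ : ℝ) (hΔ : Δ ∈ Set.Ioo 0 Real.pi) (c : ℝ) (hc : 0 ≤ c) :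
    Tendsto (fun K : ℕ => (K : ℝ) * (1 - tepaiP1 Δ (c / K))) atTop
      (nhds (c * (3 - Real.cos Δ) / (2 * Real.sin Δ))) := by
  obtain ⟨hΔ0, hΔπ⟩ := hΔ
  have hpi := Real.pi_pos
  have hs2 : 0 < Real.sin (Δ/2) := Real.sin_pos_of_pos_of_lt_pi (by linarith) (by linarith)
  have hc2 : 0 < Real.cos (Δ/2) := Real.cos_pos_of_mem_Ioo ⟨by linarith, by linarith⟩
  have hsΔ : 0 < Real.sin Δ := Real.sin_pos_of_pos_of_lt_pi hΔ0 hΔπ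
  have hp10 : tepaiP1 Δ 0 = 1 := by
    have h1 : tepaiA1 Δ 0 = 1 := by
      simp [tepaiA1, inv_mul_cancel₀ (ne_of_gt hs2)]
    simp [tepaiP1, tepaiGamma, tepaiA2, tepaiA3, h1]
  rcases eq_or_lt_of_le hc with rfl | hc'
  · simp only [zero_div, hp10, sub_self, mul_zero, zero_mul, zero_div]
    exact tendsto_const_nhds
  -- c > 0
  have key : Tendsto (fun θ : ℝ => (1 - tepaiP1 Δ θ)/θ) (nhdsWithin 0 (Set.Ioi 0))
      (nhds ((3 - Real.cos Δ)/(2 * Real.sin Δ))) := by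
    have lim2 : Tendsto (fun θ : ℝ => Real.sin θ / θ) (nhdsWithin 0 (Set.Ioi 0)) (nhds 1) := by
      have h := Real.hasDerivAt_sin 0
      rw [hasDerivAt_iff_tendsto_slope] at h
      have h' : Tendsto (fun θ : ℝ => Real.sin θ / θ) (nhdsWithin 0 {(0:ℝ)}ᶜ) (nhds 1) := by
        simpa [slope_fun_def, div_eq_inv_mul] using h
      exact h'.mono_left (nhdsWithin_mono _ fun x hx => ne_of_gt hx)
    have lim3 : Tendsto (fun θ : ℝ => Real.sin (θ/2) / θ) (nhdsWithin 0 (Set.Ioi 0))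
        (nhds (1/2)) := by
      have h2 : HasDerivAt (fun θ : ℝ => Real.sin (θ/2)) (1/2) 0 := by
        have := (Real.hasDerivAt_sin ((0:ℝ)/2)).comp 0 ((hasDerivAt_id (0:ℝ)).div_const 2)
        exact this.congr_deriv (by norm_num)
      rw [hasDerivAt_iff_tendsto_slope] at h2
      have h' : Tendsto (fun θ : ℝ => Real.sin (θ/2) / θ) (nhdsWithin 0 {(0:ℝ)}ᶜ)
          (nhds (1/2)) := by
        simpa [slope_fun_def, div_eq_inv_mul] using h2
      exact h'.mono_left (nhdsWithin_mono _ fun x hx => ne_of_gt hx)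
    have contγ : Continuous (tepaiGamma Δ) := by
      unfold tepaiGamma tepaiA1 tepaiA2 tepaiA3
      fun_prop
    have limγ : Tendsto (fun θ : ℝ => tepaiGamma Δ θ) (nhdsWithin 0 (Set.Ioi 0)) (nhds 1) := by
      have hγ0 : tepaiGamma Δ 0 = 1 := by
        have h1 : tepaiA1 Δ 0 = 1 := by
          simp [tepaiA1, inv_mul_cancel₀ (ne_of_gt hs2)]
        simp [tepaiGamma, tepaiA2, tepaiA3, h1]
      have := (contγ.tendsto 0).mono_left (nhdsWithin_le_nhds (s := Set.Ioi 0))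
      rwa [hγ0] at this
    have limss : Tendsto (fun θ : ℝ => Real.sin (Δ/2 - θ/2)) (nhdsWithin 0 (Set.Ioi 0))
        (nhds (Real.sin (Δ/2))) := by
      have : Continuous (fun θ : ℝ => Real.sin (Δ/2 - θ/2)) := by fun_prop
      have h := (this.tendsto 0).mono_left (nhdsWithin_le_nhds (s := Set.Ioi 0))
      simpa using h
    have comb : Tendsto (fun θ : ℝ =>
        ((Real.sin Δ)⁻¹ * (Real.sin θ / θ)
          + (Real.cos (Δ/2))⁻¹ * (Real.sin (θ/2) / θ) * Real.sin (Δ/2 - θ/2))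
          / tepaiGamma Δ θ) (nhdsWithin 0 (Set.Ioi 0))
        (nhds (((Real.sin Δ)⁻¹ * 1 + (Real.cos (Δ/2))⁻¹ * (1/2) * Real.sin (Δ/2)) / 1)) :=
      Tendsto.div ((tendsto_const_nhds.mul lim2).add
        ((tendsto_const_nhds.mul lim3).mul limss)) limγ one_ne_zero
    have hval : ((Real.sin Δ)⁻¹ * 1 + (Real.cos (Δ/2))⁻¹ * (1/2) * Real.sin (Δ/2)) / 1
        = (3 - Real.cos Δ)/(2 * Real.sin Δ) := by
      have hsin : Real.sin Δ = 2 * Real.sin (Δ/2) * Real.cos (Δ/2) := by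
        rw [← Real.sin_two_mul]; ring_nf
      have hcos : Real.cos Δ = 1 - 2 * Real.sin (Δ/2)^2 := by
        have h1 : Real.cos (2*(Δ/2)) = 2 * Real.cos (Δ/2)^2 - 1 := Real.cos_two_mul _
        have h2 := Real.sin_sq_add_cos_sq (Δ/2)
        have h3 : 2*(Δ/2) = Δ := by ring
        rw [h3] at h1; linarith
      rw [hsin, hcos]
      field_simp
      ring
    rw [hval] at comb
    refine comb.congr' ?_
    filter_upwards [self_mem_nhdsWithin, Ioo_mem_nhdsGT_of_mem (by constructor <;> linarith :
      (0:ℝ) ∈ Set.Ico 0 Δ)] with θ hθ hθΔ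
    have hθ0 : (0:ℝ) < θ := hθ
    have hθΔ' : θ < Δ := hθΔ.2
    have hsθ : 0 < Real.sin θ := Real.sin_pos_of_pos_of_lt_pi hθ0 (by linarith)
    have hsθ2 : 0 < Real.sin (θ/2) := Real.sin_pos_of_pos_of_lt_pi (by linarith) (by linarith)
    have hcθ2 : 0 < Real.cos (θ/2) := Real.cos_pos_of_mem_Ioo ⟨by linarith, by linarith⟩
    have hss : 0 < Real.sin (Δ/2 - θ/2) :=
      Real.sin_pos_of_pos_of_lt_pi (by linarith) (by linarith)
    have ha1 : 0 < tepaiA1 Δ θ := by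
      unfold tepaiA1; positivity
    have ha2 : 0 < tepaiA2 Δ θ := by
      unfold tepaiA2; positivity
    have ha3 : tepaiA3 Δ θ < 0 := by
      unfold tepaiA3
      have : 0 < (Real.cos (Δ/2))⁻¹ * Real.sin (θ/2) * Real.sin (Δ/2 - θ/2) := by positivity
      linarith
    have hγ : tepaiGamma Δ θ = tepaiA1 Δ θ + tepaiA2 Δ θ + (-(tepaiA3 Δ θ)) := by
      unfold tepaiGamma
      rw [abs_of_pos ha1, abs_of_pos ha2, abs_of_neg ha3]
    have hγpos : 0 < tepaiGamma Δ θ := by rw [hγ]; linarith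
    have hp1 : 1 - tepaiP1 Δ θ = (tepaiA2 Δ θ + (-(tepaiA3 Δ θ))) / tepaiGamma Δ θ := by
      rw [tepaiP1, abs_of_pos ha1, eq_div_iff (ne_of_gt hγpos), sub_mul, one_mul,
        div_mul_cancel₀ _ (ne_of_gt hγpos), hγ]
      ring
    rw [hp1]
    unfold tepaiA2 tepaiA3
    field_simp
  -- compose with θ = c / K
  have hcomp : Tendsto (fun K : ℕ => c / (K : ℝ)) atTop (nhdsWithin 0 (Set.Ioi 0)) := by
    rw [tendsto_nhdsWithin_iff]
    constructor
    · exact tendsto_const_div_atTop_nhds_zero_nat c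
    · filter_upwards [eventually_gt_atTop 0] with K hK
      exact div_pos hc' (by exact_mod_cast hK)
  have hmain := (key.comp hcomp).const_mul c
  have heq : (fun K : ℕ => c * ((1 - tepaiP1 Δ (c / K)) / (c / K)))
      =ᶠ[atTop] (fun K : ℕ => (K : ℝ) * (1 - tepaiP1 Δ (c / K))) := by
    filter_upwards [eventually_gt_atTop 0] with K hK
    have hK' : (0:ℝ) < (K:ℝ) := by exact_mod_cast hK
    field_simp
  have := hmain.congr' heq
  rw [mul_div_assoc]
  exact this
end

section
/- First-order Trotter product-formula error bound: let H₁,…,H_J be n×n Hermitian complex matrices, H := Σ_{j=1}^{J} H_j, t ∈ ℝ, and K a positive integer. Then ‖exp(−i t H) − (exp(−i (t/K) H₁)·exp(−i (t/K) H₂)···exp(−i (t/K) H_J))^K‖ ≤ (t²/(2K)) · Σ_{1 ≤ γ < β ≤ J} ‖[H_γ, H_β]‖, where ‖·‖ denotes the ℓ² operator norm, exp denotes the matrix exponential, and [A,B] := AB − BA. -/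
open Matrix
open scoped Matrix.Norms.L2Operator

section TrotterAux

open NormedSpace

variable {n : ℕ}



private lemma norm_one_le' : ‖(1 : Matrix (Fin n) (Fin n) ℂ)‖ ≤ 1 := by
  have h : ‖star (1 : Matrix (Fin n) (Fin n) ℂ) * 1‖ = ‖(1 : Matrix (Fin n) (Fin n) ℂ)‖ * ‖(1 : Matrix (Fin n) (Fin n) ℂ)‖ :=
    CStarRing.norm_star_mul_self
  simp only [star_one, one_mul] at h
  nlinarith [norm_nonneg (1 : Matrix (Fin n) (Fin n) ℂ)]

private lemma exp_mul_exp_neg (A : Matrix (Fin n) (Fin n) ℂ) :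
    exp A * exp (-A) = 1 := by
  rw [← Matrix.exp_add_of_commute _ _ ((Commute.refl A).neg_right), add_neg_cancel, exp_zero]

private lemma norm_exp_skew_le_one (X : Matrix (Fin n) (Fin n) ℂ) (hX : star X = -X) :
    ‖exp X‖ ≤ 1 := by
  have h1 : star (exp X) * exp X = 1 := by
    rw [star_exp, hX, ← Matrix.exp_add_of_commute _ _ ((Commute.refl X).neg_left), neg_add_cancel, exp_zero]
  have h2 : ‖star (exp X) * exp X‖ = ‖exp X‖ * ‖exp X‖ := CStarRing.norm_star_mul_self
  rw [h1] at h2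
  nlinarith [norm_nonneg (exp X), norm_one_le' (n := n)]

private lemma skew_smul {X : Matrix (Fin n) (Fin n) ℂ} (hX : star X = -X) (s : ℝ) :
    star (s • X) = -(s • X) := by
  rw [star_smul, star_trivial, hX, smul_neg]

private lemma conj_bound (X B : Matrix (Fin n) (Fin n) ℂ) (hX : star X = -X) (s : ℝ) :
    ‖exp (s • X) * B * exp (s • (-X)) - B‖ ≤ |s| * ‖X * B - B * X‖ := by
  set g : ℝ → Matrix (Fin n) (Fin n) ℂ :=
    fun u => exp ((s * u) • X) * B * exp ((s * u) • (-X)) with hg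
  have hderiv : ∀ u : ℝ, HasDerivAt g
      (s • (exp ((s * u) • X) * (X * B - B * X) * exp ((s * u) • (-X)))) u := by
    intro u
    have h1 : HasDerivAt (fun u : ℝ => exp ((s * u) • X)) (s • (exp ((s * u) • X) * X)) u := by
      have hi : HasDerivAt (fun u : ℝ => s * u) s u := by
        simpa using (hasDerivAt_id u).const_mul s
      have := (hasDerivAt_exp_smul_const (𝕂 := ℝ) X (s * u)).scomp u hi
      exact this
    have h2 : HasDerivAt (fun u : ℝ => exp ((s * u) • (-X)))
        (s • ((-X) * exp ((s * u) • (-X)))) u := by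
      have hi : HasDerivAt (fun u : ℝ => s * u) s u := by
        simpa using (hasDerivAt_id u).const_mul s
      have := (hasDerivAt_exp_smul_const' (𝕂 := ℝ) (-X) (s * u)).scomp u hi
      exact this
    have h3 := ((h1.mul_const B).mul h2)
    refine h3.congr_deriv ?_
    simp only [smul_mul_assoc, mul_smul_comm]
    rw [← smul_add]
    congr 1
    noncomm_ring
  have hbd : ∀ u ∈ Set.Icc (0:ℝ) 1, ∀ u' ∈ Set.Icc (0:ℝ) 1, True := fun _ _ _ _ => trivial
  have key := norm_image_sub_le_of_norm_deriv_le_segment'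
    (f := g) (a := 0) (b := 1)
    (f' := fun u => s • (exp ((s * u) • X) * (X * B - B * X) * exp ((s * u) • (-X))))
    (fun u _ => (hderiv u).hasDerivWithinAt)
    (C := |s| * ‖X * B - B * X‖) ?_ 1 (by norm_num)
  · have hg1 : g 1 = exp (s • X) * B * exp (s • (-X)) := by simp [hg]
    have hg0 : g 0 = B := by simp [hg]
    rw [hg1, hg0] at key
    simpa using key
  · intro u hu
    rw [norm_smul, Real.norm_eq_abs]
    have e1 : ‖exp ((s * u) • X)‖ ≤ 1 := norm_exp_skew_le_one _ (skew_smul hX _)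
    have e2 : ‖exp ((s * u) • (-X))‖ ≤ 1 := by
      refine norm_exp_skew_le_one _ (skew_smul ?_ _)
      rw [star_neg, hX, neg_neg]
    calc |s| * ‖exp ((s * u) • X) * (X * B - B * X) * exp ((s * u) • (-X))‖
        ≤ |s| * (‖exp ((s * u) • X) * (X * B - B * X)‖ * ‖exp ((s * u) • (-X))‖) :=
          mul_le_mul_of_nonneg_left (norm_mul_le _ _) (abs_nonneg s)
      _ ≤ |s| * (‖X * B - B * X‖ * 1) := by
          refine mul_le_mul_of_nonneg_left ?_ (abs_nonneg s)
          refine mul_le_mul ?_ e2 (norm_nonneg _) (norm_nonneg _)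
          calc ‖exp ((s * u) • X) * (X * B - B * X)‖
              ≤ ‖exp ((s * u) • X)‖ * ‖X * B - B * X‖ := norm_mul_le _ _
            _ ≤ 1 * ‖X * B - B * X‖ := mul_le_mul_of_nonneg_right e1 (norm_nonneg _)
            _ = ‖X * B - B * X‖ := one_mul _
      _ = |s| * ‖X * B - B * X‖ := by ring

private lemma comm_exp_bound (X B : Matrix (Fin n) (Fin n) ℂ) (hX : star X = -X) (s : ℝ) :
    ‖exp (s • X) * B - B * exp (s • X)‖ ≤ |s| * ‖X * B - B * X‖ := by
  have hinv : exp (s • (-X)) * exp (s • X) = 1 := by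
    rw [smul_neg, ← exp_mul_exp_neg (-(s • X))]
    simp
  have hfact : exp (s • X) * B - B * exp (s • X)
      = (exp (s • X) * B * exp (s • (-X)) - B) * exp (s • X) := by
    rw [sub_mul, mul_assoc, mul_assoc, hinv, mul_one]
  rw [hfact]
  calc ‖(exp (s • X) * B * exp (s • (-X)) - B) * exp (s • X)‖
      ≤ ‖exp (s • X) * B * exp (s • (-X)) - B‖ * ‖exp (s • X)‖ := norm_mul_le _ _
    _ ≤ (|s| * ‖X * B - B * X‖) * 1 := by
        refine mul_le_mul (conj_bound X B hX s) (norm_exp_skew_le_one _ (skew_smul hX _))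
          (norm_nonneg _) (by positivity)
    _ = |s| * ‖X * B - B * X‖ := mul_one _



/-- sum of commutator norms over ordered pairs in a list -/
private noncomputable def commSum : List (Matrix (Fin n) (Fin n) ℂ) → ℝ
  | [] => 0
  | X :: L => (L.map fun Y => ‖X * Y - Y * X‖).sum + commSum L

private lemma commSum_nonneg (L : List (Matrix (Fin n) (Fin n) ℂ)) : 0 ≤ commSum L := by
  induction L with
  | nil => simp [commSum]
  | cons X L ih =>
    refine add_nonneg (List.sum_nonneg ?_) ih
    intro x hx
    obtain ⟨Y, _, rfl⟩ := List.mem_map.1 hx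
    exact norm_nonneg _

private lemma norm_comm_sum_le (X : Matrix (Fin n) (Fin n) ℂ)
    (L : List (Matrix (Fin n) (Fin n) ℂ)) :
    ‖X * L.sum - L.sum * X‖ ≤ (L.map fun Y => ‖X * Y - Y * X‖).sum := by
  induction L with
  | nil => simp
  | cons Y L ih =>
    simp only [List.sum_cons, List.map_cons]
    have : X * (Y + L.sum) - (Y + L.sum) * X = (X * Y - Y * X) + (X * L.sum - L.sum * X) := by
      noncomm_ring
    rw [this]
    exact (norm_add_le _ _).trans (add_le_add le_rfl ih)

private noncomputable def Vprod (L : List (Matrix (Fin n) (Fin n) ℂ)) (s : ℝ) : Matrix (Fin n) (Fin n) ℂ :=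
  (L.map fun X => exp (s • X)).prod


@[simp] private lemma Vprod_nil (s : ℝ) : Vprod ([] : List (Matrix (Fin n) (Fin n) ℂ)) s = 1 := rfl

private lemma Vprod_cons (X : Matrix (Fin n) (Fin n) ℂ) (L : List (Matrix (Fin n) (Fin n) ℂ))
    (s : ℝ) : Vprod (X :: L) s = exp (s • X) * Vprod L s := by simp [Vprod]

private lemma norm_Vprod_le_one (L : List (Matrix (Fin n) (Fin n) ℂ))
    (hL : ∀ X ∈ L, star X = -X) (s : ℝ) : ‖Vprod L s‖ ≤ 1 := by
  induction L with
  | nil => simpa using (norm_one_le' : ‖(1 : Matrix (Fin n) (Fin n) ℂ)‖ ≤ 1)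
  | cons X L ih =>
    rw [Vprod_cons]
    calc ‖exp (s • X) * Vprod L s‖ ≤ ‖exp (s • X)‖ * ‖Vprod L s‖ := norm_mul_le _ _
      _ ≤ 1 * 1 := mul_le_mul (norm_exp_skew_le_one _ (skew_smul (hL X (by simp)) s))
          (ih fun Y hY => hL Y (by simp [hY])) (norm_nonneg _) zero_le_one
      _ = 1 := mul_one 1

private lemma key (L : List (Matrix (Fin n) (Fin n) ℂ)) (hL : ∀ X ∈ L, star X = -X) (s : ℝ) :
    ∃ W : Matrix (Fin n) (Fin n) ℂ, HasDerivAt (Vprod L) W s ∧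
      ‖W - L.sum * Vprod L s‖ ≤ |s| * commSum L := by
  induction L with
  | nil =>
    refine ⟨0, ?_, ?_⟩
    · exact hasDerivAt_const s (1 : Matrix (Fin n) (Fin n) ℂ)
    · simp [commSum]
  | cons X L ih =>
    obtain ⟨W, hW, hWb⟩ := ih (fun Y hY => hL Y (by simp [hY]))
    have hXs : star X = -X := hL X (by simp)
    have hexp : HasDerivAt (fun u : ℝ => exp (u • X)) (X * exp (s • X)) s :=
      hasDerivAt_exp_smul_const' (𝕂 := ℝ) X s
    have hd : HasDerivAt (Vprod (X :: L))
        ((X * exp (s • X)) * Vprod L s + exp (s • X) * W) s := by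
      have := hexp.mul hW
      refine HasDerivAt.congr_of_eventuallyEq this ?_
      filter_upwards with u
      rw [Vprod_cons]
      rfl
    refine ⟨_, hd, ?_⟩
    have hre : (X * exp (s • X)) * Vprod L s + exp (s • X) * W
        - (X :: L).sum * Vprod (X :: L) s
        = exp (s • X) * (W - L.sum * Vprod L s)
          + (exp (s • X) * L.sum - L.sum * exp (s • X)) * Vprod L s := by
      rw [List.sum_cons, Vprod_cons]
      noncomm_ring
    rw [hre]
    have h1 : ‖exp (s • X) * (W - L.sum * Vprod L s)‖ ≤ |s| * commSum L := by
      calc ‖exp (s • X) * (W - L.sum * Vprod L s)‖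
          ≤ ‖exp (s • X)‖ * ‖W - L.sum * Vprod L s‖ := norm_mul_le _ _
        _ ≤ 1 * (|s| * commSum L) :=
            mul_le_mul (norm_exp_skew_le_one _ (skew_smul hXs s)) hWb (norm_nonneg _)
              zero_le_one
        _ = |s| * commSum L := one_mul _
    have h2 : ‖(exp (s • X) * L.sum - L.sum * exp (s • X)) * Vprod L s‖
        ≤ |s| * (L.map fun Y => ‖X * Y - Y * X‖).sum := by
      calc ‖(exp (s • X) * L.sum - L.sum * exp (s • X)) * Vprod L s‖
          ≤ ‖exp (s • X) * L.sum - L.sum * exp (s • X)‖ * ‖Vprod L s‖ := norm_mul_le _ _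
        _ ≤ (|s| * ‖X * L.sum - L.sum * X‖) * 1 :=
            mul_le_mul (comm_exp_bound X L.sum hXs s)
              (norm_Vprod_le_one L (fun Y hY => hL Y (by simp [hY])) s) (norm_nonneg _)
              (by positivity)
        _ = |s| * ‖X * L.sum - L.sum * X‖ := mul_one _
        _ ≤ |s| * (L.map fun Y => ‖X * Y - Y * X‖).sum :=
            mul_le_mul_of_nonneg_left (norm_comm_sum_le X L) (abs_nonneg s)
    calc ‖exp (s • X) * (W - L.sum * Vprod L s)
          + (exp (s • X) * L.sum - L.sum * exp (s • X)) * Vprod L s‖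
        ≤ _ + _ := norm_add_le _ _
      _ ≤ |s| * commSum L + |s| * (L.map fun Y => ‖X * Y - Y * X‖).sum := add_le_add h1 h2
      _ = |s| * commSum (X :: L) := by rw [commSum]; ring

private lemma Vprod_zero (L : List (Matrix (Fin n) (Fin n) ℂ)) : Vprod L 0 = 1 := by
  induction L with
  | nil => rfl
  | cons X L ih => rw [Vprod_cons, zero_smul, exp_zero, one_mul, ih]

private lemma sum_skew (L : List (Matrix (Fin n) (Fin n) ℂ)) (hL : ∀ X ∈ L, star X = -X) :
    star L.sum = -L.sum := by
  induction L with
  | nil => simp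
  | cons X L ih =>
    rw [List.sum_cons, star_add, hL X (by simp), ih fun Y hY => hL Y (by simp [hY]), neg_add]

private lemma step (L : List (Matrix (Fin n) (Fin n) ℂ)) (hL : ∀ X ∈ L, star X = -X) (τ : ℝ) :
    ‖exp (τ • L.sum) - Vprod L τ‖ ≤ τ ^ 2 / 2 * commSum L := by
  classical
  set S := L.sum with hS
  set C := commSum L with hC
  have hSskew : star S = -S := sum_skew L hL
  set D : ℝ → Matrix (Fin n) (Fin n) ℂ := fun s => (key L hL s).choose with hD
  have hDprop : ∀ s, HasDerivAt (Vprod L) (D s) s ∧ ‖D s - S * Vprod L s‖ ≤ |s| * C :=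
    fun s => (key L hL s).choose_spec
  set Φ : ℝ → Matrix (Fin n) (Fin n) ℂ := fun s => 1 - exp (s • (-S)) * Vprod L s with hΦ
  set Φ' : ℝ → Matrix (Fin n) (Fin n) ℂ :=
    fun s => -(exp (s • (-S)) * (D s - S * Vprod L s)) with hΦ'
  have hΦderiv : ∀ s, HasDerivAt Φ (Φ' s) s := by
    intro s
    have h1 : HasDerivAt (fun u : ℝ => exp (u • (-S))) ((-S) * exp (s • (-S))) s :=
      hasDerivAt_exp_smul_const' (𝕂 := ℝ) (-S) s
    have h2 := (h1.mul (hDprop s).1).const_sub (1 : Matrix (Fin n) (Fin n) ℂ)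
    refine h2.congr_deriv ?_
    have hcomm : (-S) * exp (s • (-S)) = exp (s • (-S)) * (-S) := by
      exact (((Commute.refl (-S)).smul_right s).exp_right).eq
    rw [hΦ']
    rw [hcomm]
    noncomm_ring
  have hΦbound : ∀ s, ‖Φ' s‖ ≤ |s| * C := by
    intro s
    rw [hΦ', norm_neg]
    calc ‖exp (s • (-S)) * (D s - S * Vprod L s)‖
        ≤ ‖exp (s • (-S))‖ * ‖D s - S * Vprod L s‖ := norm_mul_le _ _
      _ ≤ 1 * (|s| * C) := by
          refine mul_le_mul ?_ (hDprop s).2 (norm_nonneg _) zero_le_one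
          refine norm_exp_skew_le_one _ (skew_smul ?_ s)
          rw [star_neg, hSskew, neg_neg]
      _ = |s| * C := one_mul _
  -- reparametrized function on [0,1]
  set h : ℝ → Matrix (Fin n) (Fin n) ℂ := fun u => Φ (τ * u) with hh
  have hhderiv : ∀ u, HasDerivAt h (τ • Φ' (τ * u)) u := by
    intro u
    have hi : HasDerivAt (fun u : ℝ => τ * u) τ u := by
      simpa using (hasDerivAt_id u).const_mul τ
    exact (hΦderiv (τ * u)).scomp u hi
  have hB : ∀ u : ℝ, HasDerivAt (fun u : ℝ => τ ^ 2 * C / 2 * u ^ 2) (τ ^ 2 * C * u) u := by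
    intro u
    have := (hasDerivAt_pow 2 u).const_mul (τ ^ 2 * C / 2)
    refine this.congr_deriv ?_
    norm_num
    ring
  have main := image_norm_le_of_norm_deriv_right_le_deriv_boundary
    (f := h) (f' := fun u => τ • Φ' (τ * u)) (a := 0) (b := 1)
    (fun u _ => ((hhderiv u).differentiableAt.continuousAt).continuousWithinAt)
    (fun u _ => (hhderiv u).hasDerivWithinAt)
    (B := fun u => τ ^ 2 * C / 2 * u ^ 2) (B' := fun u => τ ^ 2 * C * u)
    (by simp [hh, hΦ, Vprod_zero]) hB
    (by
      intro u hu
      obtain ⟨hu0, _⟩ := hu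
      rw [norm_smul, Real.norm_eq_abs]
      calc |τ| * ‖Φ' (τ * u)‖ ≤ |τ| * (|τ * u| * C) :=
            mul_le_mul_of_nonneg_left (hΦbound (τ * u)) (abs_nonneg τ)
        _ = τ ^ 2 * C * u := by
            rw [abs_mul, abs_of_nonneg hu0, ← sq_abs τ]
            ring)
  have hfin := main (Set.right_mem_Icc.2 zero_le_one)
  simp only [hh, mul_one, one_pow] at hfin
  -- transfer back
  have hfact : exp (τ • S) - Vprod L τ = exp (τ • S) * Φ τ := by
    rw [hΦ]
    rw [mul_sub, mul_one, ← mul_assoc]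
    have : exp (τ • S) * exp (τ • (-S)) = 1 := by
      rw [smul_neg]; exact exp_mul_exp_neg (τ • S)
    rw [this, one_mul]
  rw [hfact]
  calc ‖exp (τ • S) * Φ τ‖ ≤ ‖exp (τ • S)‖ * ‖Φ τ‖ := norm_mul_le _ _
    _ ≤ 1 * (τ ^ 2 * C / 2) := by
        refine mul_le_mul (norm_exp_skew_le_one _ (skew_smul hSskew τ)) hfin (norm_nonneg _)
          zero_le_one
    _ = τ ^ 2 / 2 * C := by ring

private lemma pow_diff_norm (a b : Matrix (Fin n) (Fin n) ℂ) (ha : ‖a‖ ≤ 1) (hb : ‖b‖ ≤ 1)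
    (K : ℕ) : ‖a ^ K - b ^ K‖ ≤ K * ‖a - b‖ := by
  induction K with
  | zero => simp
  | succ K ih =>
    have hsplit : a ^ (K + 1) - b ^ (K + 1) = a ^ K * (a - b) + (a ^ K - b ^ K) * b := by
      noncomm_ring
    have hak : ‖a ^ K‖ ≤ 1 := by
      rcases Nat.eq_zero_or_pos K with h | h
      · subst h
        simp only [pow_zero]
        have h1 : ‖star (1 : Matrix (Fin n) (Fin n) ℂ) * 1‖
            = ‖(1 : Matrix (Fin n) (Fin n) ℂ)‖ * ‖(1 : Matrix (Fin n) (Fin n) ℂ)‖ :=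
          CStarRing.norm_star_mul_self
        simp only [star_one, one_mul] at h1
        nlinarith [norm_nonneg (1 : Matrix (Fin n) (Fin n) ℂ)]
      · exact (norm_pow_le' a h).trans (pow_le_one₀ (norm_nonneg a) ha)
    calc ‖a ^ (K + 1) - b ^ (K + 1)‖ = ‖a ^ K * (a - b) + (a ^ K - b ^ K) * b‖ := by rw [hsplit]
      _ ≤ ‖a ^ K * (a - b)‖ + ‖(a ^ K - b ^ K) * b‖ := norm_add_le _ _
      _ ≤ ‖a ^ K‖ * ‖a - b‖ + ‖a ^ K - b ^ K‖ * ‖b‖ := add_le_add (norm_mul_le _ _) (norm_mul_le _ _)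
      _ ≤ 1 * ‖a - b‖ + (K * ‖a - b‖) * 1 := by
          refine add_le_add (mul_le_mul_of_nonneg_right hak (norm_nonneg _)) ?_
          exact mul_le_mul ih hb (norm_nonneg _) (by positivity)
      _ = (K + 1 : ℕ) * ‖a - b‖ := by push_cast; ring

private lemma Iio_sum_eq {m : ℕ} (F : Fin m → Fin m → ℝ) :
    (∑ β, ∑ γ ∈ Finset.Iio β, F γ β) = ∑ β, ∑ γ, if γ < β then F γ β else 0 := by
  refine Finset.sum_congr rfl fun β _ => ?_
  rw [show Finset.Iio β = Finset.univ.filter (· < β) by ext x; simp, Finset.sum_filter]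

private lemma commSum_ofFn : ∀ {J : ℕ} (g : Fin J → Matrix (Fin n) (Fin n) ℂ),
    commSum (List.ofFn g) = ∑ β, ∑ γ ∈ Finset.Iio β, ‖g γ * g β - g β * g γ‖ := by
  intro J
  induction J with
  | zero => intro g; simp [commSum]
  | succ J ih =>
    intro g
    rw [List.ofFn_succ, commSum, ih (fun i => g i.succ)]
    rw [Iio_sum_eq, Iio_sum_eq]
    rw [Fin.sum_univ_succ (f := fun β => ∑ γ, if γ < β then ‖g γ * g β - g β * g γ‖ else 0)]
    simp only [Fin.not_lt_zero, if_false, Finset.sum_const_zero, zero_add]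
    have hterm : ∀ β : Fin J, (∑ γ : Fin (J+1), if γ < β.succ then ‖g γ * g β.succ - g β.succ * g γ‖ else 0)
        = ‖g 0 * g β.succ - g β.succ * g 0‖
          + ∑ γ : Fin J, if γ < β then ‖g γ.succ * g β.succ - g β.succ * g γ.succ‖ else 0 := by
      intro β
      rw [Fin.sum_univ_succ]
      congr 1
      · refine Finset.sum_congr rfl fun γ _ => ?_
        simp only [Fin.succ_lt_succ_iff]
    rw [Finset.sum_congr rfl fun β _ => hterm β, Finset.sum_add_distrib]
    congr 1
    · rw [← List.sum_ofFn]
      congr 1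
      rw [List.map_ofFn]
      rfl

private lemma smul_rewrite (r : ℝ) (A : Matrix (Fin n) (Fin n) ℂ) :
    (-Complex.I * (r : ℂ)) • A = r • ((-Complex.I) • A) := by
  rw [← Complex.coe_smul, smul_smul, mul_comm]


private lemma assemble (L : List (Matrix (Fin n) (Fin n) ℂ)) (hL : ∀ X ∈ L, star X = -X)
    (t : ℝ) (K : ℕ) (hK : 1 ≤ K) :
    ‖exp (t • L.sum) - (Vprod L (t / (K : ℝ))) ^ K‖
      ≤ t ^ 2 / (2 * (K : ℝ)) * commSum L := by
  have hKR : (K : ℝ) ≠ 0 := by positivity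
  have hts : t • L.sum = (K : ℕ) • ((t / (K : ℝ)) • L.sum) := by
    rw [← Nat.cast_smul_eq_nsmul ℝ, smul_smul]
    congr 1
    field_simp
  have hU : ‖exp ((t / (K : ℝ)) • L.sum)‖ ≤ 1 :=
    norm_exp_skew_le_one _ (skew_smul (sum_skew L hL) _)
  have hV : ‖Vprod L (t / (K : ℝ))‖ ≤ 1 := norm_Vprod_le_one L hL _
  calc ‖exp (t • L.sum) - (Vprod L (t / (K : ℝ))) ^ K‖
      = ‖(exp ((t / (K : ℝ)) • L.sum)) ^ K - (Vprod L (t / (K : ℝ))) ^ K‖ := by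
        rw [hts, Matrix.exp_nsmul]
    _ ≤ K * ‖exp ((t / (K : ℝ)) • L.sum) - Vprod L (t / (K : ℝ))‖ :=
        pow_diff_norm _ _ hU hV K
    _ ≤ K * ((t / (K : ℝ)) ^ 2 / 2 * commSum L) :=
        mul_le_mul_of_nonneg_left (step L hL _) (by positivity)
    _ = t ^ 2 / (2 * (K : ℝ)) * commSum L := by
        field_simp


end TrotterAux

open NormedSpace in
/-- **First-order Trotter product-formula error bound**: for Hermitian `H₁,…,H_J` with
`H = Σ_j H_j`, time `t`, and `K ≥ 1` Trotter steps,
`‖exp(−i t H) − (exp(−i (t/K) H₁)···exp(−i (t/K) H_J))^K‖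
  ≤ (t²/(2K)) Σ_{γ<β} ‖[H_γ, H_β]‖` in the ℓ² operator norm. -/
theorem first_order_trotter_error_bound
    (n J : ℕ) (H : Fin J → Matrix (Fin n) (Fin n) ℂ)
    (hH : ∀ j, (H j).IsHermitian)
    (t : ℝ) (K : ℕ) (hK : 1 ≤ K) :
    ‖NormedSpace.exp ((-Complex.I * (t : ℂ)) • ∑ j, H j)
        - ((List.ofFn fun j : Fin J =>
            NormedSpace.exp ((-Complex.I * ((t / (K : ℝ) : ℝ) : ℂ)) • H j)).prod) ^ K‖
      ≤ (t ^ 2 / (2 * (K : ℝ))) *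
          ∑ β : Fin J, ∑ γ ∈ Finset.Iio β, ‖H γ * H β - H β * H γ‖ := by
  have hexp_eq : (exp : Matrix (Fin n) (Fin n) ℂ → _) = exp := rfl
  have hskew : ∀ Y ∈ List.ofFn (fun j => (-Complex.I) • H j), star Y = -Y := by
    intro Y hY
    rw [List.mem_ofFn] at hY
    obtain ⟨j, rfl⟩ := hY
    rw [star_smul, Matrix.star_eq_conjTranspose, (hH j).eq,
      show star (-Complex.I) = Complex.I by simp, ← neg_smul, neg_neg]
  have e1 : NormedSpace.exp ((-Complex.I * (t : ℂ)) • ∑ j, H j)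
      = exp (t • (List.ofFn fun j => (-Complex.I) • H j).sum) := by
    rw [hexp_eq, smul_rewrite, List.sum_ofFn]
    congr 2
    rw [Finset.smul_sum]
  have e2 : (List.ofFn fun j : Fin J =>
      NormedSpace.exp ((-Complex.I * ((t / (K : ℝ) : ℝ) : ℂ)) • H j)).prod
      = Vprod (List.ofFn fun j => (-Complex.I) • H j) (t / (K : ℝ)) := by
    rw [Vprod, List.map_ofFn]
    refine congrArg List.prod (congrArg List.ofFn (funext fun j => ?_))
    show exp ((-Complex.I * ((t / (K : ℝ) : ℝ) : ℂ)) • H j)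
      = exp ((t / (K : ℝ)) • ((-Complex.I) • H j))
    rw [hexp_eq, smul_rewrite]
  have hXc : ∀ γ β : Fin J, ‖((-Complex.I) • H γ) * ((-Complex.I) • H β)
      - ((-Complex.I) • H β) * ((-Complex.I) • H γ)‖ = ‖H γ * H β - H β * H γ‖ := by
    intro γ β
    rw [smul_mul_smul_comm, smul_mul_smul_comm, neg_mul_neg, Complex.I_mul_I, ← smul_sub,
      norm_smul]
    simp
  have hcs : commSum (List.ofFn fun j => (-Complex.I) • H j)
      = ∑ β : Fin J, ∑ γ ∈ Finset.Iio β, ‖H γ * H β - H β * H γ‖ := by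
    rw [commSum_ofFn]
    exact Finset.sum_congr rfl fun β _ => Finset.sum_congr rfl fun γ _ => hXc γ β
  rw [e1, e2, ← hcs]
  exact assemble _ hskew t K hK
end

section
/- Trotter error bound on expectation values: let H₁,…,H_J be n×n Hermitian complex matrices, H := Σ_{j=1}^{J} H_j, t ∈ ℝ, K a positive integer, O an n×n Hermitian matrix, and ρ an n×n positive semidefinite matrix with trace 1. Let V := (exp(−i (t/K) H₁)···exp(−i (t/K) H_J))^K be the K-step first-order Trotter circuit. Then |Tr(O·exp(−i t H) ρ exp(i t H)) − Tr(O·V ρ V*)| ≤ (t²/K) · ‖O‖ · Σ_{1 ≤ γ < β ≤ J} ‖[H_γ, H_β]‖, where ‖·‖ denotes the ℓ² operator norm and * denotes conjugate transpose. -/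
open Matrix NormedSpace
open scoped Matrix.Norms.L2Operator ComplexOrder

set_option maxHeartbeats 1000000

noncomputable section TrotterAux

variable {n : ℕ}

namespace TrotterAux

abbrev Mat (n : ℕ) := Matrix (Fin n) (Fin n) ℂ

/-- `ue A r = exp(-i r A)`. -/
def ue (A : Mat n) (r : ℝ) : Mat n := exp ((-Complex.I * (r : ℂ)) • A)

lemma ue_eq (A : Mat n) (r : ℝ) : ue A r = exp (r • ((-Complex.I) • A)) := by
  rw [smul_comm, ← Complex.coe_smul, smul_smul, ue, mul_comm]

lemma hasDerivAt_ue (A : Mat n) (r : ℝ) :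
    HasDerivAt (fun u : ℝ => ue A u) (ue A r * ((-Complex.I) • A)) r := by
  simp only [ue_eq]
  exact hasDerivAt_exp_smul_const ((-Complex.I) • A) r

lemma continuous_ue (A : Mat n) : Continuous (fun u : ℝ => ue A u) := by
  simp only [ue_eq]
  exact continuous_iff_continuousAt.2 fun r => by simpa only [ue_eq] using (hasDerivAt_ue A r).continuousAt

lemma ue_zero (A : Mat n) : ue A 0 = 1 := by
  simp [ue, exp_zero]

lemma ue_add (A : Mat n) (r s : ℝ) : ue A (r + s) = ue A r * ue A s := by
  rw [ue, ue, ue, ← Matrix.exp_add_of_commute]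
  · congr 1
    push_cast
    rw [← add_smul]; ring_nf
  · exact (Commute.refl A).smul_left _ |>.smul_right _

lemma ue_mul_ue_neg (A : Mat n) (r : ℝ) : ue A r * ue A (-r) = 1 := by
  rw [← ue_add, add_neg_cancel, ue_zero]

lemma star_ue (A : Mat n) (hA : A.IsHermitian) (r : ℝ) : star (ue A r) = ue A (-r) := by
  rw [ue, star_exp, ue]
  congr 1
  rw [star_smul, star_eq_conjTranspose, hA.eq]
  congr 1
  simp only [Complex.star_def, map_neg, _root_.map_mul, Complex.conj_I, Complex.conj_ofReal]
  push_cast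
  ring

lemma norm_one_le : ‖(1 : Mat n)‖ ≤ 1 := by
  rw [Matrix.cstar_norm_def, _root_.map_one]
  exact ContinuousLinearMap.norm_id_le

lemma norm_ue_le (A : Mat n) (hA : A.IsHermitian) (r : ℝ) : ‖ue A r‖ ≤ 1 := by
  have h2 : ‖ue A r‖ * ‖ue A r‖ = ‖star (ue A r) * ue A r‖ :=
    (CStarRing.norm_star_mul_self).symm
  rw [star_ue A hA] at h2
  have h3 : ue A (-r) * ue A r = 1 := by
    have := ue_mul_ue_neg A (-r); rwa [neg_neg] at this
  rw [h3] at h2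
  nlinarith [norm_nonneg (ue A r), norm_one_le (n := n)]

lemma smulA_comm_ue (A : Mat n) (c : ℂ) (r : ℝ) :
    (c • A) * ue A r = ue A r * (c • A) :=
  ((((Commute.refl A).smul_left c).smul_right (-Complex.I * (r : ℂ))).exp_right).eq

lemma norm_comm_ue_le (A B : Mat n) (hA : A.IsHermitian) (u : ℝ) :
    ‖B * ue A u - ue A u * B‖ ≤ |u| * ‖A * B - B * A‖ := by
  set C := ‖A * B - B * A‖ with hC
  set X : Mat n := (-Complex.I) • A with hX
  set Ψ : ℝ → Mat n := fun v => ue A v * B * ue A (-v) with hΨ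
  have hderiv : ∀ v : ℝ, HasDerivAt Ψ (ue A v * (X * B - B * X) * ue A (-v)) v := by
    intro v
    have h1 : HasDerivAt (fun w : ℝ => ue A w) (ue A v * X) v := hasDerivAt_ue A v
    have h2 : HasDerivAt (fun w : ℝ => ue A (-w)) (-(ue A (-v) * X)) v := by
      have htmp := (hasDerivAt_ue A (-v)).scomp v (hasDerivAt_neg v)
      simpa only [Function.comp_def, neg_one_smul] using htmp
    have h3 := (h1.mul_const B).mul h2
    refine h3.congr_deriv ?_
    have hc : X * ue A (-v) = ue A (-v) * X := smulA_comm_ue A _ _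
    rw [mul_neg, ← hc]
    noncomm_ring
  have hbound : ∀ v : ℝ, ‖ue A v * (X * B - B * X) * ue A (-v)‖ ≤ C := by
    intro v
    have hXB : X * B - B * X = (-Complex.I) • (A * B - B * A) := by
      rw [hX, smul_mul_assoc, mul_smul_comm, smul_sub]
    have h1 : ‖X * B - B * X‖ = C := by
      rw [hXB, norm_smul, norm_neg, Complex.norm_I, one_mul, hC]
    have hCnn : (0:ℝ) ≤ C := hC ▸ norm_nonneg _
    have e1 : ‖ue A v * (X * B - B * X) * ue A (-v)‖ ≤ ‖ue A v * (X * B - B * X)‖ * ‖ue A (-v)‖ :=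
      norm_mul_le _ _
    have e2 : ‖ue A v * (X * B - B * X)‖ ≤ ‖ue A v‖ * ‖X * B - B * X‖ := norm_mul_le _ _
    have e3 := norm_ue_le A hA v
    have e4 := norm_ue_le A hA (-v)
    nlinarith [norm_nonneg (ue A v), norm_nonneg (ue A (-v)),
      norm_nonneg (ue A v * (X * B - B * X)), h1]
  have hmvt : ‖Ψ u - Ψ 0‖ ≤ C * ‖u - (0 : ℝ)‖ := by
    refine Convex.norm_image_sub_le_of_norm_hasDerivWithin_le
      (f := Ψ) (f' := fun v => ue A v * (X * B - B * X) * ue A (-v))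
      (fun v _ => (hderiv v).hasDerivWithinAt) (fun v _ => hbound v)
      convex_univ (Set.mem_univ 0) (Set.mem_univ u)
  have hΨ0 : Ψ 0 = B := by simp [hΨ, ue_zero]
  have key : B * ue A u - ue A u * B = (Ψ 0 - Ψ u) * ue A u := by
    rw [hΨ0, hΨ]
    simp only [sub_mul]
    congr 1
    rw [mul_assoc, mul_assoc]
    have : ue A (-u) * ue A u = 1 := by
      have := ue_mul_ue_neg A (-u); rwa [neg_neg] at this
    rw [this, mul_one]
  rw [key]
  calc ‖(Ψ 0 - Ψ u) * ue A u‖ ≤ ‖Ψ 0 - Ψ u‖ * ‖ue A u‖ := norm_mul_le _ _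
    _ ≤ (C * ‖u - (0 : ℝ)‖) * 1 := by
        gcongr
        · rw [norm_sub_rev]; exact hmvt
        · exact norm_ue_le A hA u
    _ = |u| * C := by rw [sub_zero, Real.norm_eq_abs]; ring

lemma step_bound_nonneg (A B : Mat n) (hA : A.IsHermitian) (hB : B.IsHermitian)
    (s : ℝ) (hs : 0 ≤ s) :
    ‖ue (A + B) s - ue A s * ue B s‖ ≤ s ^ 2 / 2 * ‖A * B - B * A‖ := by
  set CAB := ‖A * B - B * A‖ with hCAB
  set XB : Mat n := (-Complex.I) • B with hXB
  set Φ : ℝ → Mat n := fun u => ue (A + B) (-u) * (ue A u * ue B u) with hΦ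
  set Φd : ℝ → Mat n :=
    fun u => ue (A + B) (-u) * ((ue A u * XB - XB * ue A u) * ue B u) with hΦd
  have hderiv : ∀ u : ℝ, HasDerivAt Φ (Φd u) u := by
    intro u
    set XA : Mat n := (-Complex.I) • A with hXA
    have g1 : HasDerivAt (fun w : ℝ => ue (A + B) (-w))
        (-(ue (A + B) (-u) * ((-Complex.I) • (A + B)))) u := by
      have htmp := (hasDerivAt_ue (A + B) (-u)).scomp u (hasDerivAt_neg u)
      simpa only [Function.comp_def, neg_one_smul] using htmp
    have g2 : HasDerivAt (fun w : ℝ => ue A w * ue B w)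
        (ue A u * XA * ue B u + ue A u * (ue B u * XB)) u :=
      (hasDerivAt_ue A u).mul (hasDerivAt_ue B u)
    have g3 := g1.mul g2
    refine g3.congr_deriv ?_
    have hcA : XA * ue A u = ue A u * XA := smulA_comm_ue A _ _
    have hcB : XB * ue B u = ue B u * XB := smulA_comm_ue B _ _
    have hsplit : (-Complex.I) • (A + B) = XA + XB := by rw [hXA, hXB, smul_add]
    rw [hΦd, hsplit]
    have hre : ue A u * XA * ue B u = XA * (ue A u * ue B u) := by
      rw [← hcA, mul_assoc]
    have hre2 : ue A u * (ue B u * XB) = ue A u * XB * ue B u := by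
      rw [← hcB, ← mul_assoc]
    rw [hre, hre2]
    noncomm_ring
  have hbound : ∀ u : ℝ, ‖Φd u‖ ≤ |u| * CAB := by
    intro u
    have hXsw : ue A u * XB - XB * ue A u = (-Complex.I) • (ue A u * B - B * ue A u) := by
      rw [hXB, mul_smul_comm, smul_mul_assoc, smul_sub]
    have h1 : ‖ue A u * XB - XB * ue A u‖ ≤ |u| * CAB := by
      rw [hXsw, norm_smul, norm_neg, Complex.norm_I, one_mul, norm_sub_rev]
      exact norm_comm_ue_le A B hA u
    have e1 : ‖Φd u‖ ≤ ‖ue (A + B) (-u)‖ * ‖(ue A u * XB - XB * ue A u) * ue B u‖ :=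
      norm_mul_le _ _
    have e2 : ‖(ue A u * XB - XB * ue A u) * ue B u‖
        ≤ ‖ue A u * XB - XB * ue A u‖ * ‖ue B u‖ := norm_mul_le _ _
    have e3 := norm_ue_le (A + B) (hA.add hB) (-u)
    have e4 := norm_ue_le B hB u
    have e5 : (0:ℝ) ≤ |u| * CAB := mul_nonneg (abs_nonneg u) (hCAB ▸ norm_nonneg _)
    nlinarith [norm_nonneg (ue (A + B) (-u)), norm_nonneg (ue B u),
      norm_nonneg (ue A u * XB - XB * ue A u),
      norm_nonneg ((ue A u * XB - XB * ue A u) * ue B u)]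
  have hcont : Continuous Φd := by
    refine ((continuous_ue (A + B)).comp continuous_neg).mul ?_
    exact (((continuous_ue A).mul continuous_const).sub
      (continuous_const.mul (continuous_ue A))).mul (continuous_ue B)
  have hftc : ∫ u in (0:ℝ)..s, Φd u = Φ s - Φ 0 :=
    intervalIntegral.integral_eq_sub_of_hasDerivAt
      (fun u _ => hderiv u) (hcont.intervalIntegrable 0 s)
  have hgint : IntervalIntegrable (fun u : ℝ => |u| * CAB) MeasureTheory.volume 0 s :=
    ((continuous_abs.mul continuous_const)).intervalIntegrable 0 s
  have hnorm : ‖∫ u in (0:ℝ)..s, Φd u‖ ≤ |∫ u in (0:ℝ)..s, |u| * CAB| :=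
    intervalIntegral.norm_integral_le_abs_of_norm_le
      (Filter.Eventually.of_forall fun u => hbound u) hgint
  have hval : ∫ u in (0:ℝ)..s, |u| * CAB = s ^ 2 / 2 * CAB := by
    rw [intervalIntegral.integral_mul_const]
    have : ∫ u in (0:ℝ)..s, |u| = ∫ u in (0:ℝ)..s, u := by
      apply intervalIntegral.integral_congr
      intro u hu
      rw [Set.uIcc_of_le hs] at hu
      exact abs_of_nonneg hu.1
    rw [this, integral_id]
    ring
  have hΦ0 : Φ 0 = 1 := by simp [hΦ, ue_zero]
  have hkey : ue (A + B) s - ue A s * ue B s = ue (A + B) s * (Φ 0 - Φ s) := by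
    rw [hΦ0, hΦ]
    rw [mul_sub, mul_one]
    congr 1
    rw [← mul_assoc, ue_mul_ue_neg, one_mul]
  rw [hkey]
  have e6 : ‖ue (A + B) s * (Φ 0 - Φ s)‖ ≤ ‖ue (A + B) s‖ * ‖Φ 0 - Φ s‖ := norm_mul_le _ _
  have e7 := norm_ue_le (A + B) (hA.add hB) s
  have e8 : ‖Φ 0 - Φ s‖ ≤ s ^ 2 / 2 * CAB := by
    rw [norm_sub_rev, ← hftc]
    calc ‖∫ u in (0:ℝ)..s, Φd u‖ ≤ |∫ u in (0:ℝ)..s, |u| * CAB| := hnorm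
      _ = s ^ 2 / 2 * CAB := by
          rw [hval, abs_of_nonneg]
          exact mul_nonneg (by positivity) (hCAB ▸ norm_nonneg _)
  nlinarith [norm_nonneg (ue (A + B) s), norm_nonneg (Φ 0 - Φ s)]

lemma ue_neg_neg (A : Mat n) (s : ℝ) : ue (-A) (-s) = ue A s := by
  rw [ue, ue]
  congr 1
  rw [smul_neg, ← neg_smul]
  congr 1
  push_cast
  ring

lemma step_bound (A B : Mat n) (hA : A.IsHermitian) (hB : B.IsHermitian) (s : ℝ) :
    ‖ue (A + B) s - ue A s * ue B s‖ ≤ s ^ 2 / 2 * ‖A * B - B * A‖ := by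
  rcases le_or_gt 0 s with hs | hs
  · exact step_bound_nonneg A B hA hB s hs
  · have h := step_bound_nonneg (-A) (-B) hA.neg hB.neg (-s) (by linarith)
    have h1 : -A + -B = -(A + B) := (neg_add A B).symm
    rw [h1, ue_neg_neg, ue_neg_neg, ue_neg_neg] at h
    have h2 : -A * -B - -B * -A = A * B - B * A := by rw [neg_mul_neg, neg_mul_neg]
    rw [h2] at h
    calc ‖ue (A + B) s - ue A s * ue B s‖ ≤ (-s) ^ 2 / 2 * ‖A * B - B * A‖ := h
      _ = s ^ 2 / 2 * ‖A * B - B * A‖ := by ring_nf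

/-- Sum of commutator norms over ordered pairs in a list. -/
def pairSum : List (Mat n) → ℝ
  | [] => 0
  | A :: L => (L.map fun B => ‖A * B - B * A‖).sum + pairSum L

lemma pairSum_nonneg (L : List (Mat n)) : 0 ≤ pairSum L := by
  induction L with
  | nil => simp [pairSum]
  | cons A L ih =>
    have h1 : 0 ≤ (L.map fun B => ‖A * B - B * A‖).sum := by
      apply List.sum_nonneg
      intro x hx
      simp only [List.mem_map] at hx
      obtain ⟨B, _, rfl⟩ := hx
      exact norm_nonneg _
    have h2 : pairSum (A :: L) = (L.map fun B => ‖A * B - B * A‖).sum + pairSum L := rfl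
    rw [h2]; linarith

lemma comm_sum_bound (A : Mat n) (L : List (Mat n)) :
    ‖A * L.sum - L.sum * A‖ ≤ (L.map fun B => ‖A * B - B * A‖).sum := by
  induction L with
  | nil => simp
  | cons B L ih =>
    simp only [List.sum_cons, List.map_cons]
    have hsplit : A * (B + L.sum) - (B + L.sum) * A
        = (A * B - B * A) + (A * L.sum - L.sum * A) := by noncomm_ring
    rw [hsplit]
    exact (norm_add_le _ _).trans (add_le_add le_rfl ih)

lemma list_sum_hermitian (L : List (Mat n)) (hL : ∀ A ∈ L, A.IsHermitian) :
    L.sum.IsHermitian := by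
  induction L with
  | nil => simp only [List.sum_nil]; exact Matrix.isHermitian_zero
  | cons A L ih =>
    rw [List.sum_cons]
    exact (hL A (List.mem_cons_self)).add (ih fun B hB => hL B (List.mem_cons_of_mem A hB))

lemma trotter_list (L : List (Mat n)) (hL : ∀ A ∈ L, A.IsHermitian) (s : ℝ) :
    ‖ue L.sum s - (L.map fun A => ue A s).prod‖ ≤ s ^ 2 / 2 * pairSum L := by
  induction L with
  | nil => simp [ue, pairSum, NormedSpace.exp_zero]
  | cons A L ih =>
    have hA := hL A (List.mem_cons_self)
    have hL' : ∀ B ∈ L, B.IsHermitian := fun B hB => hL B (List.mem_cons_of_mem A hB)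
    have hS := list_sum_hermitian L hL'
    simp only [List.sum_cons, List.map_cons, List.prod_cons]
    have htri : ‖ue (A + L.sum) s - ue A s * (L.map fun B => ue B s).prod‖
        ≤ ‖ue (A + L.sum) s - ue A s * ue L.sum s‖
          + ‖ue A s * (ue L.sum s - (L.map fun B => ue B s).prod)‖ := by
      have : ue (A + L.sum) s - ue A s * (L.map fun B => ue B s).prod
          = (ue (A + L.sum) s - ue A s * ue L.sum s)
            + ue A s * (ue L.sum s - (L.map fun B => ue B s).prod) := by noncomm_ring
      rw [this]; exact norm_add_le _ _
    have h1 := step_bound A L.sum hA hS s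
    have h2 : ‖ue A s * (ue L.sum s - (L.map fun B => ue B s).prod)‖
        ≤ s ^ 2 / 2 * pairSum L := by
      have e1 : ‖ue A s * (ue L.sum s - (L.map fun B => ue B s).prod)‖
          ≤ ‖ue A s‖ * ‖ue L.sum s - (L.map fun B => ue B s).prod‖ := norm_mul_le _ _
      have e2 := norm_ue_le A hA s
      have e3 := ih hL'
      nlinarith [norm_nonneg (ue A s), norm_nonneg (ue L.sum s - (L.map fun B => ue B s).prod),
        pairSum_nonneg L, sq_nonneg s]
    have h3 : ‖A * L.sum - L.sum * A‖ ≤ (L.map fun B => ‖A * B - B * A‖).sum :=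
      comm_sum_bound A L
    have hps : pairSum (A :: L) = (L.map fun B => ‖A * B - B * A‖).sum + pairSum L := rfl
    rw [hps]
    have hs2 : (0:ℝ) ≤ s ^ 2 / 2 := by positivity
    nlinarith [htri]

lemma norm_pow_le_one (U : Mat n) (hU : ‖U‖ ≤ 1) (k : ℕ) : ‖U ^ k‖ ≤ 1 := by
  induction k with
  | zero => simpa using norm_one_le (n := n)
  | succ k ih =>
    rw [pow_succ]
    have := norm_mul_le (U ^ k) U
    nlinarith [norm_nonneg (U ^ k), norm_nonneg U]

lemma pow_diff_bound (U V : Mat n) (hU : ‖U‖ ≤ 1) (hV : ‖V‖ ≤ 1) (K : ℕ) :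
    ‖U ^ K - V ^ K‖ ≤ K * ‖U - V‖ := by
  induction K with
  | zero => simp
  | succ k ih =>
    have hsplit : U ^ (k + 1) - V ^ (k + 1) = U ^ k * (U - V) + (U ^ k - V ^ k) * V := by
      rw [pow_succ, pow_succ]; noncomm_ring
    rw [hsplit]
    have e1 : ‖U ^ k * (U - V) + (U ^ k - V ^ k) * V‖
        ≤ ‖U ^ k * (U - V)‖ + ‖(U ^ k - V ^ k) * V‖ := norm_add_le _ _
    have e2 : ‖U ^ k * (U - V)‖ ≤ ‖U ^ k‖ * ‖U - V‖ := norm_mul_le _ _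
    have e3 : ‖(U ^ k - V ^ k) * V‖ ≤ ‖U ^ k - V ^ k‖ * ‖V‖ := norm_mul_le _ _
    have e4 := norm_pow_le_one U hU k
    push_cast
    nlinarith [norm_nonneg (U - V), norm_nonneg (U ^ k - V ^ k), norm_nonneg V,
      norm_nonneg (U ^ k)]

open scoped MatrixOrder in
lemma abs_trace_mul_le (M R : Mat n) (hR : R.PosSemidef) :
    ‖(M * R).trace‖ ≤ ‖M‖ * (R.trace).re := by
  classical
  set S := CFC.sqrt R with hSdef
  have hSS : S * S = R := CFC.sqrt_mul_sqrt_self R hR.nonneg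
  have hSh : S.IsHermitian := (CFC.sqrt_nonneg R).posSemidef.1
  set x : Fin n → EuclideanSpace ℂ (Fin n) :=
    fun i => (EuclideanSpace.equiv (Fin n) ℂ).symm (fun k => S k i) with hx
  have hxapp : ∀ i k, x i k = S k i := fun i k => rfl
  have hconj : ∀ i k, S i k = starRingEnd ℂ (S k i) := by
    intro i k
    conv_lhs => rw [← hSh.eq]
    rfl
  set y : Fin n → EuclideanSpace ℂ (Fin n) :=
    fun i => (EuclideanSpace.equiv (Fin n) ℂ).symm (M *ᵥ (x i : Fin n → ℂ)) with hy
  have htr : (M * R).trace = (S * M * S).trace := by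
    rw [← hSS, ← mul_assoc, Matrix.trace_mul_cycle M S S]
  have hdiag : ∀ i, (S * M * S) i i = (inner ℂ (x i) (y i) : ℂ) := by
    intro i
    rw [mul_assoc, Matrix.mul_apply, PiLp.inner_apply]
    apply Finset.sum_congr rfl
    intro k _
    rw [RCLike.inner_apply', hconj i k]
    congr 1
  have hRdiag : ∀ i, (R i i).re = ‖x i‖ ^ 2 := by
    intro i
    have h1 : R i i = (inner ℂ (x i) (x i) : ℂ) := by
      rw [← hSS, Matrix.mul_apply, PiLp.inner_apply]
      apply Finset.sum_congr rfl
      intro k _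
      rw [RCLike.inner_apply', hconj i k]
      rfl
    rw [h1]
    exact inner_self_eq_norm_sq (𝕜 := ℂ) (x i)
  have hbd : ∀ i, ‖(S * M * S) i i‖ ≤ ‖M‖ * ‖x i‖ ^ 2 := by
    intro i
    rw [hdiag i]
    calc ‖(inner ℂ (x i) (y i) : ℂ)‖ ≤ ‖x i‖ * ‖y i‖ := norm_inner_le_norm _ _
      _ ≤ ‖x i‖ * (‖M‖ * ‖x i‖) := by
          have := Matrix.l2_opNorm_mulVec M (x i)
          have hnn := norm_nonneg (x i)
          nlinarith [norm_nonneg (y i)]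
      _ = ‖M‖ * ‖x i‖ ^ 2 := by ring
  have htrace_sum : (M * R).trace = ∑ i, (S * M * S) i i := by
    rw [htr]; rfl
  rw [htrace_sum]
  have hre : (R.trace).re = ∑ i, ‖x i‖ ^ 2 := by
    have : R.trace = ∑ i, R i i := rfl
    rw [this, Complex.re_sum]
    exact Finset.sum_congr rfl fun i _ => hRdiag i
  rw [hre, Finset.mul_sum]
  exact (norm_sum_le _ _).trans (Finset.sum_le_sum fun i _ => hbd i)

lemma norm_prod_ue_le_one (L : List (Mat n)) (hL : ∀ A ∈ L, A.IsHermitian) (s : ℝ) :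
    ‖(L.map fun A => ue A s).prod‖ ≤ 1 := by
  induction L with
  | nil => simpa using norm_one_le (n := n)
  | cons A L ih =>
    simp only [List.map_cons, List.prod_cons]
    have e1 : ‖ue A s * (L.map fun A => ue A s).prod‖
        ≤ ‖ue A s‖ * ‖(L.map fun A => ue A s).prod‖ := norm_mul_le _ _
    have e2 := norm_ue_le A (hL A (List.mem_cons_self)) s
    have e3 := ih fun B hB => hL B (List.mem_cons_of_mem A hB)
    nlinarith [norm_nonneg (ue A s), norm_nonneg ((L.map fun A => ue A s).prod)]

lemma pairSum_ofFn (J : ℕ) (H : Fin J → Mat n) :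
    pairSum (List.ofFn H)
      = ∑ γ : Fin J, ∑ β ∈ Finset.Ioi γ, ‖H γ * H β - H β * H γ‖ := by
  induction J with
  | zero => simp [pairSum]
  | succ J ih =>
    rw [List.ofFn_succ]
    have hps : pairSum (H 0 :: List.ofFn fun i : Fin J => H i.succ)
        = ((List.ofFn fun i : Fin J => H i.succ).map fun B => ‖H 0 * B - B * H 0‖).sum
          + pairSum (List.ofFn fun i : Fin J => H i.succ) := rfl
    rw [hps, List.map_ofFn, ih]
    rw [Fin.sum_univ_succ]
    congr 1
    · rw [Fin.sum_Ioi_zero, ← List.sum_ofFn]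
      rfl
    · apply Finset.sum_congr rfl
      intro i _
      rw [Fin.sum_Ioi_succ]

lemma sum_Iio_eq_sum_Ioi (J : ℕ) (f : Fin J → Fin J → ℝ) :
    (∑ β : Fin J, ∑ γ ∈ Finset.Iio β, f γ β)
      = ∑ γ : Fin J, ∑ β ∈ Finset.Ioi γ, f γ β := by
  classical
  calc (∑ β : Fin J, ∑ γ ∈ Finset.Iio β, f γ β)
      = ∑ β : Fin J, ∑ γ : Fin J, if γ ∈ Finset.Iio β then f γ β else 0 := by
        refine Finset.sum_congr rfl fun β _ => ?_
        rw [Finset.sum_ite_mem, Finset.univ_inter]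
    _ = ∑ γ : Fin J, ∑ β : Fin J, if γ ∈ Finset.Iio β then f γ β else 0 := Finset.sum_comm
    _ = ∑ γ : Fin J, ∑ β ∈ Finset.Ioi γ, f γ β := by
        refine Finset.sum_congr rfl fun γ _ => ?_
        have : ∀ β : Fin J, (if γ ∈ Finset.Iio β then f γ β else 0)
            = if β ∈ Finset.Ioi γ then f γ β else 0 := by
          intro β
          simp only [Finset.mem_Iio, Finset.mem_Ioi]
        rw [Finset.sum_congr rfl fun β _ => this β, Finset.sum_ite_mem, Finset.univ_inter]

end TrotterAux

open TrotterAux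

/-- **Trotter error bound on expectation values**: for Hermitian `H₁,…,H_J` with
`H = Σ_j H_j`, a Hermitian observable `O`, a density matrix `ρ`, and the `K`-step
first-order Trotter circuit `V = (exp(−i(t/K)H₁)···exp(−i(t/K)H_J))^K`,
`|Tr(O exp(−itH) ρ exp(itH)) − Tr(O V ρ V*)| ≤ (t²/K) ‖O‖ Σ_{γ<β} ‖[H_γ, H_β]‖`. -/
theorem trotter_expectation_value_error_bound
    (n J : ℕ) (H : Fin J → Matrix (Fin n) (Fin n) ℂ)
    (hH : ∀ j, (H j).IsHermitian)
    (t : ℝ) (K : ℕ) (hK : 1 ≤ K)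
    (O : Matrix (Fin n) (Fin n) ℂ) (hO : O.IsHermitian)
    (ρ : Matrix (Fin n) (Fin n) ℂ) (hρ : ρ.PosSemidef) (hρtr : ρ.trace = 1) :
    ‖((O * (NormedSpace.exp ((-Complex.I * (t : ℂ)) • ∑ j, H j) * ρ *
            NormedSpace.exp ((Complex.I * (t : ℂ)) • ∑ j, H j))).trace
          - (O * (((List.ofFn fun j : Fin J =>
                NormedSpace.exp ((-Complex.I * ((t / (K : ℝ) : ℝ) : ℂ)) • H j)).prod ^ K) *
              ρ *
              (((List.ofFn fun j : Fin J =>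
                NormedSpace.exp ((-Complex.I * ((t / (K : ℝ) : ℝ) : ℂ)) • H j)).prod ^ K)ᴴ))).trace)‖
      ≤ (t ^ 2 / (K : ℝ)) * ‖O‖ *
          ∑ β : Fin J, ∑ γ ∈ Finset.Iio β, ‖H γ * H β - H β * H γ‖ := by
  classical
  have hKpos : (0:ℝ) < (K:ℝ) := by exact_mod_cast hK
  have hKne : (K:ℝ) ≠ 0 := ne_of_gt hKpos
  set HH : Mat n := ∑ j, H j with hHHdef
  set τ : ℝ := t / (K:ℝ) with hτ
  have hHH : HH.IsHermitian := by
    rw [hHHdef, ← List.sum_ofFn]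
    apply list_sum_hermitian
    intro A hA
    rw [List.mem_ofFn] at hA
    obtain ⟨j, rfl⟩ := hA
    exact hH j
  have hofFnHerm : ∀ A ∈ List.ofFn H, A.IsHermitian := by
    intro A hA
    rw [List.mem_ofFn] at hA
    obtain ⟨j, rfl⟩ := hA
    exact hH j
  set P : Mat n := (List.ofFn fun j : Fin J => ue (H j) τ).prod with hP
  set U : Mat n := ue HH t with hU
  set V : Mat n := P ^ K with hV
  have hE2 : NormedSpace.exp ((Complex.I * (t : ℂ)) • HH) = star U := by
    rw [hU, star_ue HH hHH t, ue]
    congr 2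
    push_cast
    ring
  have hmapP : (List.ofFn H).map (fun A => ue A τ) = List.ofFn fun j : Fin J => ue (H j) τ :=
    List.map_ofFn (f := H) (g := fun A => ue A τ)
  have hPnorm : ‖P‖ ≤ 1 := by
    rw [hP, ← hmapP]
    exact norm_prod_ue_le_one (List.ofFn H) hofFnHerm τ
  have hU1norm : ‖ue HH τ‖ ≤ 1 := norm_ue_le HH hHH τ
  have hUnorm : ‖U‖ ≤ 1 := norm_ue_le HH hHH t
  have hVnorm : ‖V‖ ≤ 1 := norm_pow_le_one P hPnorm K
  have hUpow : U = (ue HH τ) ^ K := by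
    rw [hU, ue, ue, ← Matrix.exp_nsmul]
    congr 1
    rw [← Nat.cast_smul_eq_nsmul ℂ K, smul_smul]
    congr 1
    rw [hτ]
    push_cast
    field_simp
  set PS : ℝ := pairSum (List.ofFn H) with hPS
  have hPSnn : 0 ≤ PS := pairSum_nonneg _
  have hstep : ‖ue HH τ - P‖ ≤ τ ^ 2 / 2 * PS := by
    have h := trotter_list (List.ofFn H) hofFnHerm τ
    rw [List.sum_ofFn, hmapP] at h
    exact h
  have hDnorm : ‖U - V‖ ≤ (K:ℝ) * (τ ^ 2 / 2 * PS) := by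
    rw [hUpow, hV]
    refine (pow_diff_bound _ _ hU1norm hPnorm K).trans ?_
    exact mul_le_mul_of_nonneg_left hstep (by positivity)
  have hDnn : 0 ≤ ‖U - V‖ := norm_nonneg _
  -- trace manipulations
  have hmat : O * (U * ρ * star U) - O * (V * ρ * star V)
      = (O * (U - V)) * ρ * star U + (O * V) * ρ * (star U - star V) := by
    noncomm_ring
  have htr1 : ((O * (U - V)) * ρ * star U).trace
      = ((star U * (O * (U - V))) * ρ).trace := Matrix.trace_mul_cycle _ _ _
  have htr2 : ((O * V) * ρ * (star U - star V)).trace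
      = (((star U - star V) * (O * V)) * ρ).trace := Matrix.trace_mul_cycle _ _ _
  have hρre : (ρ.trace).re = 1 := by rw [hρtr]; rfl
  have hstarUnorm : ‖star U‖ ≤ 1 := by
    rw [hU, star_ue HH hHH t]
    exact norm_ue_le HH hHH (-t)
  have hstarDnorm : ‖star U - star V‖ = ‖U - V‖ := by
    rw [← star_sub, Matrix.star_eq_conjTranspose, Matrix.l2_opNorm_conjTranspose]
  have habs1 : ‖((star U * (O * (U - V))) * ρ).trace‖ ≤ ‖O‖ * ‖U - V‖ := by
    refine (abs_trace_mul_le _ ρ hρ).trans ?_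
    rw [hρre, mul_one]
    have e1 : ‖star U * (O * (U - V))‖ ≤ ‖star U‖ * ‖O * (U - V)‖ := norm_mul_le _ _
    have e2 : ‖O * (U - V)‖ ≤ ‖O‖ * ‖U - V‖ := norm_mul_le _ _
    nlinarith [norm_nonneg (star U), norm_nonneg (O * (U - V)), norm_nonneg O]
  have habs2 : ‖(((star U - star V) * (O * V)) * ρ).trace‖ ≤ ‖O‖ * ‖U - V‖ := by
    refine (abs_trace_mul_le _ ρ hρ).trans ?_
    rw [hρre, mul_one]
    have e1 : ‖(star U - star V) * (O * V)‖ ≤ ‖star U - star V‖ * ‖O * V‖ := norm_mul_le _ _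
    have e2 : ‖O * V‖ ≤ ‖O‖ * ‖V‖ := norm_mul_le _ _
    rw [hstarDnorm] at e1
    have hOnn : (0:ℝ) ≤ ‖O‖ := norm_nonneg _
    calc ‖(star U - star V) * (O * V)‖ ≤ ‖U - V‖ * ‖O * V‖ := e1
      _ ≤ ‖U - V‖ * (‖O‖ * ‖V‖) := mul_le_mul_of_nonneg_left e2 hDnn
      _ ≤ ‖U - V‖ * (‖O‖ * 1) := by
          refine mul_le_mul_of_nonneg_left ?_ hDnn
          exact mul_le_mul_of_nonneg_left hVnorm hOnn
      _ = ‖O‖ * ‖U - V‖ := by ring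
  have hsum : (∑ β : Fin J, ∑ γ ∈ Finset.Iio β, ‖H γ * H β - H β * H γ‖) = PS := by
    rw [sum_Iio_eq_sum_Ioi J (fun γ β => ‖H γ * H β - H β * H γ‖), hPS, pairSum_ofFn]
  have hmain : ‖(O * (U * ρ * star U)).trace - (O * (V * ρ * star V)).trace‖
      ≤ (t ^ 2 / (K : ℝ)) * ‖O‖ * PS := by
    calc ‖(O * (U * ρ * star U)).trace - (O * (V * ρ * star V)).trace‖
        = ‖((star U * (O * (U - V))) * ρ).trace
            + (((star U - star V) * (O * V)) * ρ).trace‖ := by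
          rw [← Matrix.trace_sub, hmat, Matrix.trace_add, htr1, htr2]
      _ ≤ ‖((star U * (O * (U - V))) * ρ).trace‖
            + ‖(((star U - star V) * (O * V)) * ρ).trace‖ :=
          norm_add_le _ _
      _ ≤ ‖O‖ * ‖U - V‖ + ‖O‖ * ‖U - V‖ := add_le_add habs1 habs2
      _ ≤ (t ^ 2 / (K : ℝ)) * ‖O‖ * PS := by
          have hτ2 : (K:ℝ) * (τ ^ 2 / 2 * PS) = t ^ 2 / (2 * (K:ℝ)) * PS := by
            rw [hτ]
            field_simp
          rw [hτ2] at hDnorm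
          have hOnn : (0:ℝ) ≤ ‖O‖ := norm_nonneg _
          have h1 : ‖O‖ * ‖U - V‖ ≤ ‖O‖ * (t ^ 2 / (2 * (K:ℝ)) * PS) :=
            mul_le_mul_of_nonneg_left hDnorm hOnn
          have heq : ‖O‖ * (t ^ 2 / (2 * (K:ℝ)) * PS) + ‖O‖ * (t ^ 2 / (2 * (K:ℝ)) * PS)
              = t ^ 2 / (K:ℝ) * ‖O‖ * PS := by
            field_simp
            ring
          linarith
  rw [hE2, hsum]
  exact hmain
end TrotterAux
end
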